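/- arXiv:2203.03135 — 4 statements merged into one kernel-verified Lean document; each statement's English description precedes it below -/
import Mathlib

section
/- Let (y_j)_{j=1}^∞ be an orthonormal sequence of independent random variables in L²([0,1]) and suppose there exist a,γ > 0 with Prob(|x| ≥ a‖x‖_{L²}) ≥ γ for every x in the closed span of (y_j)_{j=1}^∞ in L²([0,1]). Then for all f,g in the closed span of (y_j + 1_{(j,j+1]})_{j=1}^∞ in L²(ℝ) one has min(‖f−g‖_{L²(ℝ)}, ‖f+g‖_{L²(ℝ)}) ≤ 6a⁻¹γ⁻¹ ‖|f|−|g|‖_{L²(ℝ)}. In particular this subspace does stable phase retrieval. -/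
open MeasureTheory ProbabilityTheory

noncomputable section

/-- Lebesgue measure on `[0,1]`, viewed as a probability space. -/
def μ01 : Measure ℝ := volume.restrict (Set.Icc 0 1)

/-- The indicator function of the interval `(j, j+1]` (for `j = n+1`, `n : ℕ`, so that the
intervals are disjoint from `[0,1]`), as an element of `L²(ℝ)`. -/
def ind (n : ℕ) : Lp ℝ 2 (volume : Measure ℝ) :=
  indicatorConstLp 2 (measurableSet_Ioc : MeasurableSet (Set.Ioc ((n : ℝ) + 1) ((n : ℝ) + 2)))
    (by rw [Real.volume_Ioc]; exact ENNReal.ofReal_ne_top) (1 : ℝ)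



lemma min_abs_le_abs_abs_sub (x z : ℝ) : min |x - z| |x + z| ≤ |(|x| - |z|)| := by
  rcases le_total 0 (x * z) with h | h
  · have hs : (|x| - |z|) ^ 2 = (x - z) ^ 2 := by
      have h1 : |x| * |z| = x * z := by rw [← abs_mul, abs_of_nonneg h]
      have hx := sq_abs x; have hz := sq_abs z
      nlinarith
    have := (sq_eq_sq_iff_abs_eq_abs (a := |x| - |z|) (b := _)).mp hs
    rw [← this]; exact min_le_left _ _
  · have hs : (|x| - |z|) ^ 2 = (x + z) ^ 2 := by
      have h1 : |x| * |z| = -(x * z) := by rw [← abs_mul, abs_of_nonpos h]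
      have hx := sq_abs x; have hz := sq_abs z
      nlinarith
    have := (sq_eq_sq_iff_abs_eq_abs (a := |x| - |z|) (b := _)).mp hs
    rw [← this]; exact min_le_right _ _

lemma sq_lower (u v m : ℝ) (hu : 0 ≤ u) (hv : 0 ≤ v) (hm : 0 ≤ m) (h : m - v ≤ u) :
    m ^ 2 / 2 - v ^ 2 ≤ u ^ 2 := by
  have h2 : m ≤ u + v := by linarith
  nlinarith [sq_nonneg (u - v), mul_nonneg (sub_nonneg.2 h2) hm]

lemma norm_sq_eq_integral {α : Type*} [MeasurableSpace α] {μ : Measure α}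
    (h : Lp ℝ 2 μ) : ‖h‖ ^ 2 = ∫ t, (h : α → ℝ) t ^ 2 ∂μ := by
  rw [← real_inner_self_eq_norm_sq, L2.inner_def]
  congr 1; ext t; simp [RCLike.inner_apply, sq]

lemma Lp_coeFn_sum {α : Type*} [MeasurableSpace α] {μ : Measure α} {ι : Type*}
    (s : Finset ι) (F : ι → Lp ℝ 2 μ) :
    ((∑ i ∈ s, F i : Lp ℝ 2 μ) : α → ℝ) =ᵐ[μ] fun t => ∑ i ∈ s, (F i : α → ℝ) t := by
  classical
  induction s using Finset.induction_on with
  | empty => simp only [Finset.sum_empty]; exact Lp.coeFn_zero ℝ 2 μ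
  | insert a s hx ih =>
    rw [Finset.sum_insert hx]
    filter_upwards [Lp.coeFn_add (F a) (∑ i ∈ s, F i), ih] with t h1 h2
    rw [Finset.sum_insert hx, h1, Pi.add_apply, h2]

-- inner product of combinations of a "scaled orthonormal" family
open RealInnerProductSpace in
lemma inner_sum_formula {E : Type*} [NormedAddCommGroup E] [InnerProductSpace ℝ E]
    {ι : Type*} [DecidableEq ι] (v : ι → E) (κ : ℝ)
    (hv : ∀ i j, ⟪v i, v j⟫ = if i = j then κ else 0)
    (s : Finset ι) (e e' : ι → ℝ) :
    ⟪∑ i ∈ s, e i • v i, ∑ j ∈ s, e' j • v j⟫ = κ * ∑ i ∈ s, e i * e' i := by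
  rw [sum_inner, Finset.mul_sum]
  refine Finset.sum_congr rfl fun i hi => ?_
  rw [inner_sum]
  simp_rw [real_inner_smul_left, real_inner_smul_right, hv]
  rw [Finset.sum_eq_single i (fun j _ hj => by simp [Ne.symm hj]) (fun h => absurd hi h)]
  simp; ring



abbrev Tset (n : ℕ) : Set ℝ := Set.Ioc ((n : ℝ) + 1) ((n : ℝ) + 2)

lemma Tset_disj_aux {i j : ℕ} (h : i < j) : Disjoint (Tset i) (Tset j) := by
  have : (i : ℝ) + 1 ≤ (j : ℝ) := by exact_mod_cast Nat.succ_le_of_lt h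
  refine Set.disjoint_left.mpr fun t h1 h2 => ?_
  have := h1.2; have := h2.1; simp only [Set.mem_Ioc] at *; linarith

lemma Tset_disj {i j : ℕ} (hij : i ≠ j) : Disjoint (Tset i) (Tset j) := by
  rcases Nat.lt_or_ge i j with h | h
  · exact Tset_disj_aux h
  · exact (Tset_disj_aux (lt_of_le_of_ne h (Ne.symm hij))).symm

lemma Tset_Icc_disj (n : ℕ) : Disjoint (Set.Icc (0:ℝ) 1) (Tset n) := by
  refine Set.disjoint_left.mpr fun t h1 h2 => ?_
  have : (0:ℝ) ≤ n := Nat.cast_nonneg n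
  have := h1.2; have := h2.1; linarith

lemma vol_Tset (n : ℕ) : (volume : Measure ℝ) (Tset n) = 1 := by
  rw [Real.volume_Ioc]; norm_num

lemma ind_coeFn (n : ℕ) :
    ((ind n : Lp ℝ 2 (volume : Measure ℝ)) : ℝ → ℝ)
      =ᵐ[volume] (Tset n).indicator (fun _ => (1:ℝ)) :=
  indicatorConstLp_coeFn

open RealInnerProductSpace

lemma norm_ind (n : ℕ) : ‖ind n‖ = 1 := by
  rw [ind, norm_indicatorConstLp two_ne_zero ENNReal.ofNat_ne_top]
  rw [measureReal_def, show volume (Set.Ioc ((n : ℝ) + 1) ((n : ℝ) + 2)) = 1 from vol_Tset n]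
  norm_num

lemma ind_inner (i j : ℕ) : ⟪ind i, ind j⟫ = if i = j then (1:ℝ) else 0 := by
  rcases eq_or_ne i j with rfl | hij
  · rw [real_inner_self_eq_norm_sq, if_pos rfl, norm_ind]; norm_num
  · rw [if_neg hij, L2.inner_def]
    rw [show (0:ℝ) = ∫ (t : ℝ), (0:ℝ) ∂(volume) from (integral_zero _ _).symm]
    refine integral_congr_ae ?_
    filter_upwards [ind_coeFn i, ind_coeFn j] with t h1 h2
    simp only [RCLike.inner_apply, starRingEnd_apply, star_trivial, h1, h2]
    by_cases h : t ∈ Tset i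
    · rw [Set.indicator_of_notMem (Set.disjoint_left.mp (Tset_disj hij) h), zero_mul]
    · rw [Set.indicator_of_notMem h, mul_zero]



section

open RealInnerProductSpace

variable (y : ℕ → Lp ℝ 2 (volume : Measure ℝ))
    (h_supp : ∀ n, ∀ᵐ t ∂(volume : Measure ℝ), t ∉ Set.Icc (0 : ℝ) 1 → (y n : ℝ → ℝ) t = 0)
    (h_on : Orthonormal ℝ y)

include h_supp in

lemma y_ind_inner (i j : ℕ) : ⟪y i, ind j⟫ = 0 := by
  rw [L2.inner_def]
  rw [show (0:ℝ) = ∫ (t : ℝ), (0:ℝ) ∂(volume) from (integral_zero _ _).symm]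
  refine integral_congr_ae ?_
  filter_upwards [h_supp i, ind_coeFn j] with t h1 h2
  simp only [RCLike.inner_apply, starRingEnd_apply, star_trivial, h2]
  by_cases h : t ∈ Tset j
  · rw [h1 (Set.disjoint_right.mp (Tset_Icc_disj j) h), mul_zero]
  · rw [Set.indicator_of_notMem h, zero_mul]

include h_supp h_on in
lemma v_inner (i j : ℕ) :
    ⟪y i + ind i, y j + ind j⟫ = if i = j then (2:ℝ) else 0 := by
  have h1 : ⟪ind i, y j⟫ = 0 := by rw [real_inner_comm]; exact y_ind_inner y h_supp j i
  rw [inner_add_left, inner_add_right, inner_add_right]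
  rw [y_ind_inner y h_supp i j, h1, ind_inner i j, orthonormal_iff_ite.mp h_on i j]
  by_cases h : i = j <;> simp [h] <;> norm_num
end


lemma indep_sums {Ω : Type*} [MeasurableSpace Ω] {μ : Measure Ω} (Y : ℕ → Ω → ℝ)
    (hY : ∀ n, Measurable (Y n)) (h : iIndepFun Y μ)
    (sm sp : Finset ℕ) (hd : Disjoint sm sp) (e e' : ℕ → ℝ) :
    IndepFun (fun t => ∑ j ∈ sm, e j * Y j t) (fun t => ∑ j ∈ sp, e' j * Y j t) μ := by
  have base := h.indepFun_finset sm sp hd hY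
  have hφ : Measurable (fun v : { x // x ∈ sm } → ℝ => ∑ i : { x // x ∈ sm }, e i.1 * v i) :=
    by fun_prop
  have hψ : Measurable (fun v : { x // x ∈ sp } → ℝ => ∑ i : { x // x ∈ sp }, e' i.1 * v i) :=
    by fun_prop
  have := base.comp hφ hψ
  convert this using 1
  · funext t; simp only [Function.comp_apply]
    rw [← Finset.sum_coe_sort sm (fun j => e j * Y j t)]
  · funext t; simp only [Function.comp_apply]
    rw [← Finset.sum_coe_sort sp (fun j => e' j * Y j t)]


instance : IsProbabilityMeasure μ01 :=
  ⟨by rw [show μ01 = volume.restrict (Set.Icc 0 1) from rfl,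
        Measure.restrict_apply_univ, Real.volume_Icc]; norm_num⟩


lemma cheb (y : ℕ → Lp ℝ 2 (volume : Measure ℝ)) (h_on : Orthonormal ℝ y)
    (a γ : ℝ) (ha : 0 < a) (hγ : 0 < γ)
    (h_prob : ∀ x : Lp ℝ 2 (volume : Measure ℝ),
      x ∈ (Submodule.span ℝ (Set.range y)).topologicalClosure →
      ENNReal.ofReal γ ≤ μ01 {t | a * ‖x‖ ≤ |(x : ℝ → ℝ) t|}) :
    a^2 * γ ≤ 1 ∧ γ ≤ 1 := by
  set Y0 : ℝ → ℝ := (y 0 : ℝ → ℝ) with hY0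
  set E0 : Set ℝ := {t | a * ‖y 0‖ ≤ |Y0 t|} with hE0
  have hmem : y 0 ∈ (Submodule.span ℝ (Set.range y)).topologicalClosure :=
    Submodule.le_topologicalClosure _ (Submodule.subset_span ⟨0, rfl⟩)
  have hE := h_prob (y 0) hmem
  have hEm : MeasurableSet E0 :=
    measurableSet_le measurable_const (Lp.stronglyMeasurable (y 0)).measurable.abs
  have htr : γ ≤ (μ01 E0).toReal :=
    (ENNReal.ofReal_le_iff_le_toReal (measure_ne_top _ _)).mp hE
  have hn1 : ‖y 0‖ = 1 := h_on.1 0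
  have hInt : Integrable (fun t => Y0 t ^ 2) μ01 :=
    ((Lp.memLp (y 0)).restrict (Set.Icc 0 1)).integrable_sq
  have h1 : a^2 * (μ01 E0).toReal ≤ ∫ t in E0, Y0 t ^ 2 ∂μ01 := by
    have hmono : ∀ t ∈ E0, (fun _ => a^2) t ≤ (fun t => Y0 t ^ 2) t := by
      intro t ht
      have h5 : a * ‖y 0‖ ≤ |Y0 t| := ht
      rw [hn1, mul_one] at h5
      simp only
      nlinarith [sq_abs (Y0 t), abs_nonneg (Y0 t)]
    have := setIntegral_mono_on (f := fun _ => a^2) (g := fun t => Y0 t ^ 2)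
      (integrableOn_const (measure_ne_top _ _))
      (hInt.integrableOn) hEm hmono
    rw [setIntegral_const, smul_eq_mul, measureReal_def, mul_comm] at this; exact this
  have h2 : ∫ t in E0, Y0 t ^ 2 ∂μ01 ≤ ∫ t, Y0 t ^ 2 ∂μ01 :=
    setIntegral_le_integral hInt (ae_of_all _ fun t => sq_nonneg _)
  have h3 : ∫ t, Y0 t ^ 2 ∂μ01 ≤ ∫ t, Y0 t ^ 2 ∂(volume : Measure ℝ) :=
    setIntegral_le_integral ((Lp.memLp (y 0)).integrable_sq)
      (ae_of_all _ fun t => sq_nonneg _)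
  have h4 : ∫ t, Y0 t ^ 2 ∂(volume : Measure ℝ) = 1 := by
    rw [← norm_sq_eq_integral, hn1]; norm_num
  constructor
  · calc a^2 * γ ≤ a^2 * (μ01 E0).toReal := by nlinarith [sq_nonneg a]
      _ ≤ 1 := by linarith
  · calc γ ≤ (μ01 E0).toReal := htr
      _ ≤ (μ01 Set.univ).toReal := ENNReal.toReal_mono (measure_ne_top _ _)
          (measure_mono (Set.subset_univ _))
      _ = 1 := by simp





variable (y : ℕ → Lp ℝ 2 (volume : Measure ℝ))

/-- the pointwise version of `y`. -/
def Yf (n : ℕ) : ℝ → ℝ := (y n : ℝ → ℝ)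

lemma Yf_meas (n : ℕ) : Measurable (Yf y n) := (Lp.stronglyMeasurable (y n)).measurable

-- a.e. pointwise identification of combinations of y
lemma comb_coeFn (s : Finset ℕ) (e : ℕ → ℝ) :
    ((∑ j ∈ s, e j • y j : Lp ℝ 2 (volume : Measure ℝ)) : ℝ → ℝ)
      =ᵐ[volume] fun t => ∑ j ∈ s, e j * Yf y j t := by
  have h1 : ∀ᵐ t ∂(volume : Measure ℝ), ∀ j : ℕ,
      ((e j • y j : Lp ℝ 2 (volume : Measure ℝ)) : ℝ → ℝ) t = e j * Yf y j t := by
    rw [ae_all_iff]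
    intro j
    filter_upwards [Lp.coeFn_smul (e j) (y j)] with t ht
    simp [ht, Yf]
  filter_upwards [Lp_coeFn_sum s (fun j => e j • y j), h1] with t ht h2
  rw [ht]; exact Finset.sum_congr rfl fun j _ => h2 j

-- a.e. pointwise identification of combinations of y + ind
lemma combv_coeFn (s : Finset ℕ) (e : ℕ → ℝ) :
    ((∑ j ∈ s, e j • (y j + ind j) : Lp ℝ 2 (volume : Measure ℝ)) : ℝ → ℝ)
      =ᵐ[volume] fun t =>
        ∑ j ∈ s, e j * (Yf y j t + (Tset j).indicator (fun _ => (1:ℝ)) t) := by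
  have h1 : ∀ᵐ t ∂(volume : Measure ℝ), ∀ j : ℕ,
      ((e j • (y j + ind j) : Lp ℝ 2 (volume : Measure ℝ)) : ℝ → ℝ) t
        = e j * (Yf y j t + (Tset j).indicator (fun _ => (1:ℝ)) t) := by
    rw [ae_all_iff]
    intro j
    filter_upwards [Lp.coeFn_smul (e j) (y j + ind j), Lp.coeFn_add (y j) (ind j),
      ind_coeFn j] with t ht ht2 ht3
    rw [ht, Pi.smul_apply, ht2, Pi.add_apply, ht3, smul_eq_mul, Yf]
  filter_upwards [Lp_coeFn_sum s (fun j => e j • (y j + ind j)), h1] with t ht h2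
  rw [ht]; exact Finset.sum_congr rfl fun j _ => h2 j

end

section
open RealInnerProductSpace



variable (y : ℕ → Lp ℝ 2 (volume : Measure ℝ))

lemma norm_comb_y (h_on : Orthonormal ℝ y) (s : Finset ℕ) (e : ℕ → ℝ) :
    ‖(∑ j ∈ s, e j • y j : Lp ℝ 2 (volume : Measure ℝ))‖^2 = ∑ j ∈ s, e j^2 := by
  classical
  rw [← real_inner_self_eq_norm_sq,
    inner_sum_formula y 1 (fun i j => orthonormal_iff_ite.mp h_on i j) s e e]
  simp [sq]

lemma norm_comb_v
    (h_supp : ∀ n, ∀ᵐ t ∂(volume : Measure ℝ), t ∉ Set.Icc (0 : ℝ) 1 → (y n : ℝ → ℝ) t = 0)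
    (h_on : Orthonormal ℝ y) (s : Finset ℕ) (e : ℕ → ℝ) :
    ‖(∑ j ∈ s, e j • (y j + ind j) : Lp ℝ 2 (volume : Measure ℝ))‖^2
      = 2 * ∑ j ∈ s, e j^2 := by
  classical
  rw [← real_inner_self_eq_norm_sq,
    inner_sum_formula _ 2 (v_inner y h_supp h_on) s e e]
  simp [sq]

lemma tail_int
    (h_supp : ∀ n, ∀ᵐ t ∂(volume : Measure ℝ), t ∉ Set.Icc (0 : ℝ) 1 → (y n : ℝ → ℝ) t = 0)
    (s : Finset ℕ) (c d : ℕ → ℝ) {j : ℕ} (hj : j ∈ s) :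
    ∫ t in Tset j, (|∑ k ∈ s, c k * (Yf y k t + (Tset k).indicator (fun _ => (1:ℝ)) t)|
      - |∑ k ∈ s, d k * (Yf y k t + (Tset k).indicator (fun _ => (1:ℝ)) t)|)^2 ∂volume
      = (|c j| - |d j|)^2 := by
  classical
  have hae : ∀ᵐ t ∂(volume.restrict (Tset j)),
      (|∑ k ∈ s, c k * (Yf y k t + (Tset k).indicator (fun _ => (1:ℝ)) t)|
        - |∑ k ∈ s, d k * (Yf y k t + (Tset k).indicator (fun _ => (1:ℝ)) t)|)^2
      = (|c j| - |d j|)^2 := by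
    filter_upwards [ae_restrict_mem (measurableSet_Ioc : MeasurableSet (Tset j)),
      ae_restrict_of_ae (ae_all_iff.mpr h_supp)] with t htj hY
    have hnic : t ∉ Set.Icc (0:ℝ) 1 := Set.disjoint_right.mp (Tset_Icc_disj j) htj
    have hsum : ∀ (e : ℕ → ℝ),
        ∑ k ∈ s, e k * (Yf y k t + (Tset k).indicator (fun _ => (1:ℝ)) t) = e j := by
      intro e
      rw [Finset.sum_eq_single_of_mem j hj]
      · simp [Yf, hY j hnic, Set.indicator_of_mem htj]
      · intro k hk hkj
        simp [Yf, hY k hnic,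
          Set.indicator_of_notMem (Set.disjoint_right.mp (Tset_disj hkj) htj)]
    rw [hsum c, hsum d]
  rw [integral_congr_ae hae, setIntegral_const, measureReal_def, vol_Tset]
  simp

lemma icc_int (s : Finset ℕ) (c d : ℕ → ℝ) :
    ∫ t in Set.Icc (0:ℝ) 1,
      (|∑ k ∈ s, c k * (Yf y k t + (Tset k).indicator (fun _ => (1:ℝ)) t)|
        - |∑ k ∈ s, d k * (Yf y k t + (Tset k).indicator (fun _ => (1:ℝ)) t)|)^2 ∂volume
      = ∫ t, (|∑ k ∈ s, c k * Yf y k t| - |∑ k ∈ s, d k * Yf y k t|)^2 ∂μ01 := by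
  refine integral_congr_ae ?_
  filter_upwards [ae_restrict_mem measurableSet_Icc] with t ht
  have h0 : ∀ k : ℕ, (Tset k).indicator (fun _ => (1:ℝ)) t = 0 :=
    fun k => Set.indicator_of_notMem (Set.disjoint_left.mp (Tset_Icc_disj k) ht) _
  simp only [h0, add_zero]

end

section

variable (y : ℕ → Lp ℝ 2 (volume : Measure ℝ))

noncomputable def Xf (s : Finset ℕ) (c : ℕ → ℝ) : ℝ → ℝ := fun t => ∑ k ∈ s, c k * Yf y k t

noncomputable def Φf (s : Finset ℕ) (c d : ℕ → ℝ) : ℝ → ℝ := fun t =>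
  (|∑ k ∈ s, c k * (Yf y k t + (Tset k).indicator (fun _ => (1:ℝ)) t)|
    - |∑ k ∈ s, d k * (Yf y k t + (Tset k).indicator (fun _ => (1:ℝ)) t)|)^2

lemma Xf_meas (s : Finset ℕ) (c : ℕ → ℝ) : Measurable (Xf y s c) :=
  Finset.measurable_sum _ fun k _ => (Yf_meas y k).const_mul _

lemma Xf_coeFn (s : Finset ℕ) (c : ℕ → ℝ) :
    ((∑ j ∈ s, c j • y j : Lp ℝ 2 (volume : Measure ℝ)) : ℝ → ℝ) =ᵐ[volume] Xf y s c :=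
  comb_coeFn y s c

lemma Xf_memLp (s : Finset ℕ) (c : ℕ → ℝ) : MemLp (Xf y s c) 2 μ01 :=
  MemLp.ae_eq (ae_restrict_of_ae (Xf_coeFn y s c))
    ((Lp.memLp (∑ j ∈ s, c j • y j)).restrict (Set.Icc 0 1))

lemma Xf_sub (s : Finset ℕ) (c d : ℕ → ℝ) (t : ℝ) :
    Xf y s c t - Xf y s d t = Xf y s (fun j => c j - d j) t := by
  simp only [Xf, ← Finset.sum_sub_distrib]
  exact Finset.sum_congr rfl fun j _ => by ring

lemma Xf_add (s : Finset ℕ) (c d : ℕ → ℝ) (t : ℝ) :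
    Xf y s c t + Xf y s d t = Xf y s (fun j => c j + d j) t := by
  simp only [Xf, ← Finset.sum_add_distrib]
  exact Finset.sum_congr rfl fun j _ => by ring

lemma Xf_split (s : Finset ℕ) (p : ℕ → Prop) [DecidablePred p] (c : ℕ → ℝ) (t : ℝ) :
    Xf y s c t = Xf y (s.filter p) c t + Xf y (s.filter (fun j => ¬ p j)) c t :=
  (Finset.sum_filter_add_sum_filter_not s p _).symm

lemma Xf_sq_int (h_on : Orthonormal ℝ y) (s : Finset ℕ) (c : ℕ → ℝ) :
    ∫ t, Xf y s c t ^ 2 ∂(volume : Measure ℝ) = ∑ j ∈ s, c j ^ 2 := by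
  rw [← norm_comb_y y h_on s c, norm_sq_eq_integral]
  exact integral_congr_ae ((Xf_coeFn y s c).mono fun t ht => by simp only [ht])

lemma Xf_sq_integrable (s : Finset ℕ) (c : ℕ → ℝ) :
    Integrable (fun t => Xf y s c t ^ 2) (volume : Measure ℝ) :=
  ((Lp.memLp (∑ j ∈ s, c j • y j)).integrable_sq).congr
    ((Xf_coeFn y s c).mono fun t ht => by simp only [ht])

lemma Xf_sq_int_μ01_le (h_on : Orthonormal ℝ y) (s : Finset ℕ) (c : ℕ → ℝ) :
    ∫ t, Xf y s c t ^ 2 ∂μ01 ≤ ∑ j ∈ s, c j ^ 2 := by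
  rw [← Xf_sq_int y h_on s c]
  exact setIntegral_le_integral (Xf_sq_integrable y s c)
    (ae_of_all _ fun t => sq_nonneg _)

end


section
variable (y : ℕ → Lp ℝ 2 (volume : Measure ℝ))

lemma tail_int_Φ
    (h_supp : ∀ n, ∀ᵐ t ∂(volume : Measure ℝ), t ∉ Set.Icc (0 : ℝ) 1 → (y n : ℝ → ℝ) t = 0)
    (s : Finset ℕ) (c d : ℕ → ℝ) {j : ℕ} (hj : j ∈ s) :
    ∫ t in Tset j, Φf y s c d t ∂(volume : Measure ℝ) = (|c j| - |d j|)^2 := by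
  simp only [Φf]
  exact tail_int y h_supp s c d hj

lemma icc_int_Φ (s : Finset ℕ) (c d : ℕ → ℝ) :
    ∫ t in Set.Icc (0:ℝ) 1, Φf y s c d t ∂(volume : Measure ℝ)
      = ∫ t, (|Xf y s c t| - |Xf y s d t|)^2 ∂μ01 := by
  simp only [Φf, Xf]
  exact icc_int y s c d
end




instance inst_s2 : IsProbabilityMeasure μ01 :=
  ⟨by rw [show μ01 = volume.restrict (Set.Icc 0 1) from rfl,
        Measure.restrict_apply_univ, Real.volume_Icc]; norm_num⟩

set_option maxHeartbeats 2000000 in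
lemma key_ineq
    (y : ℕ → Lp ℝ 2 (volume : Measure ℝ))
    (h_supp : ∀ n, ∀ᵐ t ∂(volume : Measure ℝ), t ∉ Set.Icc (0 : ℝ) 1 → (y n : ℝ → ℝ) t = 0)
    (h_on : Orthonormal ℝ y)
    (h_indep : iIndepFun (fun n => ((y n : ℝ → ℝ))) μ01)
    (a γ : ℝ) (ha : 0 < a) (hγ : 0 < γ)
    (h_prob : ∀ x : Lp ℝ 2 (volume : Measure ℝ),
      x ∈ (Submodule.span ℝ (Set.range y)).topologicalClosure →
      ENNReal.ofReal γ ≤ μ01 {t | a * ‖x‖ ≤ |(x : ℝ → ℝ) t|})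
    (s : Finset ℕ) (c d : ℕ → ℝ) :
    min ‖(∑ j ∈ s, c j • (y j + ind j)) - ∑ j ∈ s, d j • (y j + ind j)‖
        ‖(∑ j ∈ s, c j • (y j + ind j)) + ∑ j ∈ s, d j • (y j + ind j)‖
      ≤ 6 * a⁻¹ * γ⁻¹ *
          ‖|(∑ j ∈ s, c j • (y j + ind j))| - |(∑ j ∈ s, d j • (y j + ind j))|‖ := by
  classical
  obtain ⟨hcheb1, hcheb2⟩ := cheb y h_on a γ ha hγ h_prob
  set f : Lp ℝ 2 (volume : Measure ℝ) := ∑ j ∈ s, c j • (y j + ind j) with hfdef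
  set g : Lp ℝ 2 (volume : Measure ℝ) := ∑ j ∈ s, d j • (y j + ind j) with hgdef
  set sp : Finset ℕ := s.filter (fun j => 0 ≤ c j * d j) with hspdef
  set sm : Finset ℕ := s.filter (fun j => ¬ 0 ≤ c j * d j) with hsmdef
  have hdisj : Disjoint sm sp := (Finset.disjoint_filter_filter_not s s _).symm
  set A : ℝ := ∑ j ∈ sp, (c j - d j)^2 with hAdef
  set B : ℝ := ∑ j ∈ sm, (c j + d j)^2 with hBdef
  set CC : ℝ := ∑ j ∈ sp, (c j + d j)^2 with hCdef
  set D : ℝ := ∑ j ∈ sm, (c j - d j)^2 with hDdef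
  have hA0 : 0 ≤ A := Finset.sum_nonneg fun j _ => sq_nonneg _
  have hB0 : 0 ≤ B := Finset.sum_nonneg fun j _ => sq_nonneg _
  have hC0 : 0 ≤ CC := Finset.sum_nonneg fun j _ => sq_nonneg _
  have hD0 : 0 ≤ D := Finset.sum_nonneg fun j _ => sq_nonneg _
  -- norms of f ± g
  have hsub : f - g = ∑ j ∈ s, (c j - d j) • (y j + ind j) := by
    rw [hfdef, hgdef, ← Finset.sum_sub_distrib]
    exact Finset.sum_congr rfl fun j _ => (sub_smul _ _ _).symm
  have hadd : f + g = ∑ j ∈ s, (c j + d j) • (y j + ind j) := by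
    rw [hfdef, hgdef, ← Finset.sum_add_distrib]
    exact Finset.sum_congr rfl fun j _ => (add_smul _ _ _).symm
  have hsplit1 := Finset.sum_filter_add_sum_filter_not s (fun j => 0 ≤ c j * d j)
    (fun j => (c j - d j)^2)
  have hsplit2 := Finset.sum_filter_add_sum_filter_not s (fun j => 0 ≤ c j * d j)
    (fun j => (c j + d j)^2)
  have hfg2 : ‖f - g‖^2 = 2 * (A + D) := by
    rw [hsub, norm_comb_v y h_supp h_on s, hAdef, hDdef, hspdef, hsmdef]
    rw [← hsplit1]
  have hfg2' : ‖f + g‖^2 = 2 * (CC + B) := by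
    rw [hadd, norm_comb_v y h_supp h_on s, hCdef, hBdef, hspdef, hsmdef]
    rw [← hsplit2]
  -- R² ≥ (A+B) + I
  set R : ℝ := ‖|f| - |g|‖ with hRdef
  set I : ℝ := ∫ t, (|Xf y s c t| - |Xf y s d t|)^2 ∂μ01 with hIdef
  have hcoeF : (↑↑f : ℝ → ℝ) =ᵐ[volume]
      fun t => ∑ k ∈ s, c k * (Yf y k t + (Tset k).indicator (fun _ => (1:ℝ)) t) := by
    rw [hfdef]; exact combv_coeFn y s c
  have hcoeG : (↑↑g : ℝ → ℝ) =ᵐ[volume]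
      fun t => ∑ k ∈ s, d k * (Yf y k t + (Tset k).indicator (fun _ => (1:ℝ)) t) := by
    rw [hgdef]; exact combv_coeFn y s d
  have habs : (fun t => ((↑↑(|f| - |g|) : ℝ → ℝ) t)^2) =ᵐ[volume] Φf y s c d := by
    filter_upwards [Lp.coeFn_sub |f| |g|, Lp.coeFn_abs f, Lp.coeFn_abs g, hcoeF, hcoeG]
      with t h1 h2 h3 h4 h5
    simp only [Φf, h1, Pi.sub_apply, h2, h3, h4, h5]
  have hR2 : R^2 = ∫ t, Φf y s c d t ∂(volume : Measure ℝ) := by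
    rw [hRdef, norm_sq_eq_integral]
    exact integral_congr_ae habs
  have hΦint : Integrable (Φf y s c d) (volume : Measure ℝ) :=
    ((Lp.memLp (|f| - |g|)).integrable_sq).congr habs
  have hΦnn : ∀ t, 0 ≤ Φf y s c d t := fun t => sq_nonneg _
  have hdisjU : Disjoint (Set.Icc (0:ℝ) 1) (⋃ j ∈ s, Tset j) := by
    refine Set.disjoint_left.mpr fun t ht h2 => ?_
    obtain ⟨j, -, hj⟩ := Set.mem_iUnion₂.mp h2
    exact Set.disjoint_left.mp (Tset_Icc_disj j) ht hj
  have hbiUm : MeasurableSet (⋃ j ∈ s, Tset j) :=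
    s.measurableSet_biUnion fun j _ => measurableSet_Ioc
  have hunion : ∫ t in (Set.Icc (0:ℝ) 1 ∪ ⋃ j ∈ s, Tset j), Φf y s c d t ∂volume
      = (∫ t in Set.Icc (0:ℝ) 1, Φf y s c d t ∂volume)
        + ∑ j ∈ s, ∫ t in Tset j, Φf y s c d t ∂volume := by
    rw [setIntegral_union hdisjU hbiUm hΦint.integrableOn hΦint.integrableOn,
      integral_biUnion_finset s (fun j _ => measurableSet_Ioc)
        (fun i _ j _ hij => Tset_disj hij) (fun j _ => hΦint.integrableOn)]
  have hK : (∑ j ∈ s, (|c j| - |d j|)^2) = A + B := by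
    rw [hAdef, hBdef, hspdef, hsmdef,
      ← Finset.sum_filter_add_sum_filter_not s (fun j => 0 ≤ c j * d j)
        (fun j => (|c j| - |d j|)^2)]
    congr 1
    · refine Finset.sum_congr rfl fun j hj => ?_
      have hcd : 0 ≤ c j * d j := (Finset.mem_filter.mp hj).2
      have h1 : |c j| * |d j| = c j * d j := by rw [← abs_mul, abs_of_nonneg hcd]
      have e1 : |c j|^2 = c j^2 := sq_abs _
      have e2 : |d j|^2 = d j^2 := sq_abs _
      linear_combination e1 + e2 - 2*h1
    · refine Finset.sum_congr rfl fun j hj => ?_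
      have hcd : c j * d j ≤ 0 := le_of_not_ge (Finset.mem_filter.mp hj).2
      have h1 : |c j| * |d j| = -(c j * d j) := by rw [← abs_mul, abs_of_nonpos hcd]
      have e1 : |c j|^2 = c j^2 := sq_abs _
      have e2 : |d j|^2 = d j^2 := sq_abs _
      linear_combination e1 + e2 - 2*h1
  have hRKI : A + B + I ≤ R^2 := by
    have h1 : ∫ t in (Set.Icc (0:ℝ) 1 ∪ ⋃ j ∈ s, Tset j), Φf y s c d t ∂volume ≤ R^2 := by
      rw [hR2]; exact setIntegral_le_integral hΦint (ae_of_all _ hΦnn)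
    have h2 : ∑ j ∈ s, ∫ t in Tset j, Φf y s c d t ∂volume = A + B := by
      rw [← hK]; exact Finset.sum_congr rfl fun j hj => tail_int_Φ y h_supp s c d hj
    have h3 : ∫ t in Set.Icc (0:ℝ) 1, Φf y s c d t ∂volume = I := by
      rw [hIdef]; exact icc_int_Φ y s c d
    rw [hunion, h2, h3] at h1; linarith only [h1]
  -- events and independence
  set q : Lp ℝ 2 (volume : Measure ℝ) := ∑ j ∈ sm, (c j - d j) • y j with hqdef
  set r : Lp ℝ 2 (volume : Measure ℝ) := ∑ j ∈ sp, (c j + d j) • y j with hrdef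
  have hqn : ‖q‖^2 = D := by rw [hqdef, hDdef]; exact norm_comb_y y h_on sm _
  have hrn : ‖r‖^2 = CC := by rw [hrdef, hCdef]; exact norm_comb_y y h_on sp _
  set Sa : Set ℝ := {x : ℝ | a * ‖q‖ ≤ |x|} with hSadef
  set Sb : Set ℝ := {x : ℝ | a * ‖r‖ ≤ |x|} with hSbdef
  have hSa : MeasurableSet Sa := measurableSet_le measurable_const continuous_abs.measurable
  have hSb : MeasurableSet Sb := measurableSet_le measurable_const continuous_abs.measurable
  set E1 : Set ℝ := Xf y sm (fun j => c j - d j) ⁻¹' Sa with hE1def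
  set E2 : Set ℝ := Xf y sp (fun j => c j + d j) ⁻¹' Sb with hE2def
  have hq_ae : (↑↑q : ℝ → ℝ) =ᵐ[μ01] Xf y sm (fun j => c j - d j) := by
    rw [hqdef]; exact ae_restrict_of_ae (Xf_coeFn y sm _)
  have hr_ae : (↑↑r : ℝ → ℝ) =ᵐ[μ01] Xf y sp (fun j => c j + d j) := by
    rw [hrdef]; exact ae_restrict_of_ae (Xf_coeFn y sp _)
  have hqmem : q ∈ (Submodule.span ℝ (Set.range y)).topologicalClosure := by
    rw [hqdef]
    exact Submodule.le_topologicalClosure _ (Submodule.sum_mem _ fun j _ =>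
      Submodule.smul_mem _ _ (Submodule.subset_span ⟨j, rfl⟩))
  have hrmem : r ∈ (Submodule.span ℝ (Set.range y)).topologicalClosure := by
    rw [hrdef]
    exact Submodule.le_topologicalClosure _ (Submodule.sum_mem _ fun j _ =>
      Submodule.smul_mem _ _ (Submodule.subset_span ⟨j, rfl⟩))
  have hE1γ : ENNReal.ofReal γ ≤ μ01 E1 := by
    refine le_trans (h_prob q hqmem) (le_of_eq (measure_congr ?_))
    exact hq_ae.mono fun t ht => by
      show (a * ‖q‖ ≤ |(↑↑q : ℝ → ℝ) t|) = (a * ‖q‖ ≤ |Xf y sm (fun j => c j - d j) t|)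
      rw [ht]
  have hE2γ : ENNReal.ofReal γ ≤ μ01 E2 := by
    refine le_trans (h_prob r hrmem) (le_of_eq (measure_congr ?_))
    exact hr_ae.mono fun t ht => by
      show (a * ‖r‖ ≤ |(↑↑r : ℝ → ℝ) t|) = (a * ‖r‖ ≤ |Xf y sp (fun j => c j + d j) t|)
      rw [ht]
  have hQR : IndepFun (Xf y sm (fun j => c j - d j)) (Xf y sp (fun j => c j + d j)) μ01 :=
    indep_sums (Yf y) (Yf_meas y) h_indep sm sp hdisj _ _
  have hprod : μ01 (E1 ∩ E2) = μ01 E1 * μ01 E2 := by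
    rw [hE1def, hE2def]
    exact indepFun_iff_measure_inter_preimage_eq_mul.mp hQR Sa Sb hSa hSb
  have hEfin : γ^2 ≤ (μ01 (E1 ∩ E2)).toReal := by
    have h1 : ENNReal.ofReal (γ^2) ≤ μ01 (E1 ∩ E2) := by
      rw [hprod, sq, ENNReal.ofReal_mul hγ.le]
      exact mul_le_mul' hE1γ hE2γ
    exact (ENNReal.ofReal_le_iff_le_toReal (measure_ne_top _ _)).mp h1
  -- pointwise lower bound on the event
  set m : ℝ := a * min ‖q‖ ‖r‖ with hmdef
  have hm0 : 0 ≤ m := mul_nonneg ha.le (le_min (norm_nonneg _) (norm_nonneg _))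
  have hm2 : m^2 = a^2 * min D CC := by
    rw [hmdef, mul_pow, ← hqn, ← hrn]
    congr 1
    rcases le_total ‖q‖ ‖r‖ with h | h
    · rw [min_eq_left h, min_eq_left (pow_le_pow_left₀ (norm_nonneg _) h 2)]
    · rw [min_eq_right h, min_eq_right (pow_le_pow_left₀ (norm_nonneg _) h 2)]
  have hpt : ∀ t ∈ E1 ∩ E2,
      m^2/2 - (|Xf y sp (fun j => c j - d j) t| + |Xf y sm (fun j => c j + d j) t|)^2
        ≤ (|Xf y s c t| - |Xf y s d t|)^2 := by
    rintro t ⟨ht1, ht2⟩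
    have ht1' : a * ‖q‖ ≤ |Xf y sm (fun j => c j - d j) t| := ht1
    have ht2' : a * ‖r‖ ≤ |Xf y sp (fun j => c j + d j) t| := ht2
    have hXZ1 : Xf y s c t - Xf y s d t
        = Xf y sp (fun j => c j - d j) t + Xf y sm (fun j => c j - d j) t := by
      rw [Xf_sub, hspdef, hsmdef]; exact Xf_split y s _ _ t
    have hXZ2 : Xf y s c t + Xf y s d t
        = Xf y sp (fun j => c j + d j) t + Xf y sm (fun j => c j + d j) t := by
      rw [Xf_add, hspdef, hsmdef]; exact Xf_split y s _ _ t
    have hmq : m ≤ a * ‖q‖ := mul_le_mul_of_nonneg_left (min_le_left _ _) ha.le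
    have hmr : m ≤ a * ‖r‖ := mul_le_mul_of_nonneg_left (min_le_right _ _) ha.le
    have hb1 : m - (|Xf y sp (fun j => c j - d j) t| + |Xf y sm (fun j => c j + d j) t|)
        ≤ |Xf y s c t - Xf y s d t| := by
      rw [hXZ1]
      have h5 : |Xf y sm (fun j => c j - d j) t|
          ≤ |Xf y sp (fun j => c j - d j) t + Xf y sm (fun j => c j - d j) t|
            + |Xf y sp (fun j => c j - d j) t| := by
        have := abs_add_le (Xf y sp (fun j => c j - d j) t + Xf y sm (fun j => c j - d j) t)
          (-(Xf y sp (fun j => c j - d j) t))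
        simpa using this
      have h6 := abs_nonneg (Xf y sm (fun j => c j + d j) t)
      linarith
    have hb2 : m - (|Xf y sp (fun j => c j - d j) t| + |Xf y sm (fun j => c j + d j) t|)
        ≤ |Xf y s c t + Xf y s d t| := by
      rw [hXZ2]
      have h5 : |Xf y sp (fun j => c j + d j) t|
          ≤ |Xf y sp (fun j => c j + d j) t + Xf y sm (fun j => c j + d j) t|
            + |Xf y sm (fun j => c j + d j) t| := by
        have := abs_add_le (Xf y sp (fun j => c j + d j) t + Xf y sm (fun j => c j + d j) t)
          (-(Xf y sm (fun j => c j + d j) t))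
        simpa using this
      have h6 := abs_nonneg (Xf y sp (fun j => c j - d j) t)
      linarith
    have hmin : m - (|Xf y sp (fun j => c j - d j) t| + |Xf y sm (fun j => c j + d j) t|)
        ≤ |(|Xf y s c t| - |Xf y s d t|)| :=
      le_trans (le_min hb1 hb2) (min_abs_le_abs_abs_sub _ _)
    have := sq_lower (|(|Xf y s c t| - |Xf y s d t|)|)
      (|Xf y sp (fun j => c j - d j) t| + |Xf y sm (fun j => c j + d j) t|) m
      (abs_nonneg _) (add_nonneg (abs_nonneg _) (abs_nonneg _)) hm0 hmin
    rwa [sq_abs] at this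
  -- integral estimate
  have hE12m : MeasurableSet (E1 ∩ E2) :=
    ((Xf_meas y sm _) hSa).inter ((Xf_meas y sp _) hSb)
  have hmP : MemLp (Xf y sp (fun j => c j - d j)) 2 μ01 := Xf_memLp y sp _
  have hmS : MemLp (Xf y sm (fun j => c j + d j)) 2 μ01 := Xf_memLp y sm _
  set W : ℝ → ℝ := fun t =>
    (|Xf y sp (fun j => c j - d j) t| + |Xf y sm (fun j => c j + d j) t|)^2 with hWdef
  have hWnn : ∀ t, 0 ≤ W t := fun t => sq_nonneg _
  have hWbound : ∀ t, W t ≤ 2 * Xf y sp (fun j => c j - d j) t^2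
      + 2 * Xf y sm (fun j => c j + d j) t^2 := by
    intro t
    rw [hWdef]
    simp only
    nlinarith [sq_nonneg (|Xf y sp (fun j => c j - d j) t| - |Xf y sm (fun j => c j + d j) t|),
      sq_abs (Xf y sp (fun j => c j - d j) t), sq_abs (Xf y sm (fun j => c j + d j) t)]
  have hg2int : Integrable (fun t => 2 * Xf y sp (fun j => c j - d j) t^2
      + 2 * Xf y sm (fun j => c j + d j) t^2) μ01 :=
    ((hmP.integrable_sq).const_mul 2).add ((hmS.integrable_sq).const_mul 2)
  have hWint : Integrable W μ01 := by
    refine Integrable.mono' hg2int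
      (((Xf_meas y sp _).abs.add (Xf_meas y sm _).abs).pow_const 2).aestronglyMeasurable
      (ae_of_all _ fun t => ?_)
    rw [Real.norm_eq_abs, abs_of_nonneg (hWnn t)]
    exact hWbound t
  have hWle : ∫ t in E1 ∩ E2, W t ∂μ01 ≤ 2 * (A + B) := by
    have h1 : ∫ t in E1 ∩ E2, W t ∂μ01 ≤ ∫ t, W t ∂μ01 :=
      setIntegral_le_integral hWint (ae_of_all _ hWnn)
    have h2 : ∫ t, W t ∂μ01 ≤ ∫ t, (2 * Xf y sp (fun j => c j - d j) t^2
        + 2 * Xf y sm (fun j => c j + d j) t^2) ∂μ01 :=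
      integral_mono hWint hg2int hWbound
    have h3 : ∫ t, (2 * Xf y sp (fun j => c j - d j) t^2
        + 2 * Xf y sm (fun j => c j + d j) t^2) ∂μ01
        = 2 * (∫ t, Xf y sp (fun j => c j - d j) t^2 ∂μ01)
          + 2 * (∫ t, Xf y sm (fun j => c j + d j) t^2 ∂μ01) := by
      rw [integral_add ((hmP.integrable_sq).const_mul 2) ((hmS.integrable_sq).const_mul 2),
        integral_const_mul, integral_const_mul]
    have h4 := Xf_sq_int_μ01_le y h_on sp (fun j => c j - d j)
    have h5 := Xf_sq_int_μ01_le y h_on sm (fun j => c j + d j)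
    rw [← hAdef] at h4
    rw [← hBdef] at h5
    linarith only [h1, h2, h3, h4, h5]
  have hΨint : Integrable (fun t => (|Xf y s c t| - |Xf y s d t|)^2) μ01 := by
    refine Integrable.mono' (((Xf_memLp y s c).sub (Xf_memLp y s d)).integrable_sq)
      (((Xf_meas y s c).abs.sub (Xf_meas y s d).abs).pow_const 2).aestronglyMeasurable
      (ae_of_all _ fun t => ?_)
    rw [Real.norm_eq_abs, abs_of_nonneg (sq_nonneg _)]
    have h := abs_abs_sub_abs_le_abs_sub (Xf y s c t) (Xf y s d t)
    have h2 : (Xf y s c - Xf y s d) t = Xf y s c t - Xf y s d t := rfl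
    rw [h2]
    nlinarith [sq_abs (Xf y s c t - Xf y s d t), abs_nonneg (|Xf y s c t| - |Xf y s d t|),
      abs_nonneg (Xf y s c t - Xf y s d t), sq_abs (|Xf y s c t| - |Xf y s d t|)]
  have hstep : m^2/2 * γ^2 - 2*(A+B) ≤ I := by
    have h1 : ∫ t in E1 ∩ E2, (m^2/2 - W t) ∂μ01
        ≤ ∫ t in E1 ∩ E2, (|Xf y s c t| - |Xf y s d t|)^2 ∂μ01 := by
      refine setIntegral_mono_on (((integrable_const _).sub hWint).integrableOn)
        (hΨint.integrableOn) hE12m (fun t ht => ?_)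
      exact hpt t ht
    have h2 : ∫ t in E1 ∩ E2, (m^2/2 - W t) ∂μ01
        = (μ01 (E1 ∩ E2)).toReal * (m^2/2) - ∫ t in E1 ∩ E2, W t ∂μ01 := by
      rw [integral_sub ((integrable_const _).integrableOn) hWint.integrableOn,
        setIntegral_const, smul_eq_mul, measureReal_def]
    have h3 : ∫ t in E1 ∩ E2, (|Xf y s c t| - |Xf y s d t|)^2 ∂μ01 ≤ I := by
      rw [hIdef]
      exact setIntegral_le_integral hΨint (ae_of_all _ fun t => sq_nonneg _)
    have h4 : γ^2 * (m^2/2) ≤ (μ01 (E1 ∩ E2)).toReal * (m^2/2) :=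
      mul_le_mul_of_nonneg_right hEfin (by positivity)
    linarith only [h1, h2, h3, h4, hWle]
  -- final arithmetic
  have hR0 : 0 ≤ R := norm_nonneg _
  have hI0 : 0 ≤ I := by
    rw [hIdef]; exact integral_nonneg fun t => sq_nonneg _
  clear_value A B CC D R I m f g q r sp sm E1 E2 W
  have hmin2 : (min ‖f - g‖ ‖f + g‖)^2 = min (‖f-g‖^2) (‖f+g‖^2) := by
    rcases le_total ‖f-g‖ ‖f+g‖ with h | h
    · rw [min_eq_left h, min_eq_left (pow_le_pow_left₀ (norm_nonneg _) h 2)]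
    · rw [min_eq_right h, min_eq_right (pow_le_pow_left₀ (norm_nonneg _) h 2)]
  have hτ : 0 < a^2*γ^2 := by positivity
  have hτ1 : a^2*γ^2 ≤ 1 := by
    nlinarith only [mul_le_mul_of_nonneg_right hcheb1 hγ.le, hcheb2, hγ]
  have hminDC : min (‖f-g‖^2) (‖f+g‖^2) ≤ 2*(A+B) + 2 * min D CC := by
    rcases le_total D CC with h | h
    · rw [min_eq_left h]
      refine le_trans (min_le_left _ _) ?_
      rw [hfg2]; linarith only [hB0]
    · rw [min_eq_right h]
      refine le_trans (min_le_right _ _) ?_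
      rw [hfg2']; linarith only [hA0]
  have hkey : a^2*γ^2 * min D CC ≤ 2*I + 4*(A+B) := by
    rw [hm2] at hstep; nlinarith only [hstep]
  have hminN : 0 ≤ min D CC := le_min hD0 hC0
  have hsq : (min ‖f - g‖ ‖f + g‖)^2 ≤ (6 * a⁻¹ * γ⁻¹ * R)^2 := by
    have hRHS : (6 * a⁻¹ * γ⁻¹ * R)^2 = 36 * R^2 / (a^2*γ^2) := by
      field_simp; ring
    rw [hmin2, hRHS, le_div_iff₀ hτ]
    have h36 : min (‖f-g‖^2) (‖f+g‖^2) * (a^2*γ^2) ≤ (2*(A+B) + 2*min D CC) * (a^2*γ^2) :=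
      mul_le_mul_of_nonneg_right hminDC hτ.le
    have hKτ : (A+B) * (a^2*γ^2) ≤ A+B :=
      mul_le_of_le_one_right (by linarith only [hA0, hB0]) hτ1
    nlinarith only [h36, hkey, hKτ, hRKI, hI0, hA0, hB0, hminN, sq_nonneg R]
  have hmin0 : 0 ≤ min ‖f - g‖ ‖f + g‖ := le_min (norm_nonneg _) (norm_nonneg _)
  have hrhs0 : 0 ≤ 6 * a⁻¹ * γ⁻¹ * R := by positivity
  nlinarith only [hsq, hmin0, hrhs0]

set_option synthInstance.maxHeartbeats 1000000 in
/-- Theorem 2.1: if `(y_j)` is an orthonormal sequence of independent random variables on `[0,1]`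
(extended by zero to `ℝ`) with `Prob(|x| ≥ a‖x‖) ≥ γ` on the closed span of `(y_j)`, then the
closed span of `(y_j + 1_{(j,j+1]})` does `6a⁻¹γ⁻¹`-stable phase retrieval in `L²(ℝ)`. -/
theorem stable_phase_retrieval_of_prob_bound
    (y : ℕ → Lp ℝ 2 (volume : Measure ℝ))
    (h_supp : ∀ n, ∀ᵐ t ∂(volume : Measure ℝ), t ∉ Set.Icc (0 : ℝ) 1 → (y n : ℝ → ℝ) t = 0)
    (h_on : Orthonormal ℝ y)
    (h_indep : iIndepFun (fun n => ((y n : ℝ → ℝ))) μ01)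
    (a γ : ℝ) (ha : 0 < a) (hγ : 0 < γ)
    (h_prob : ∀ x : Lp ℝ 2 (volume : Measure ℝ),
      x ∈ (Submodule.span ℝ (Set.range y)).topologicalClosure →
      ENNReal.ofReal γ ≤ μ01 {t | a * ‖x‖ ≤ |(x : ℝ → ℝ) t|}) :
    ∀ f g : Lp ℝ 2 (volume : Measure ℝ),
      f ∈ (Submodule.span ℝ (Set.range fun n => y n + ind n)).topologicalClosure →
      g ∈ (Submodule.span ℝ (Set.range fun n => y n + ind n)).topologicalClosure →
      min ‖f - g‖ ‖f + g‖ ≤ 6 * a⁻¹ * γ⁻¹ * ‖|f| - |g|‖ := by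
  classical
  intro f g hf hg
  -- the inequality on the (algebraic) span
  have hspan : ∀ u ∈ Submodule.span ℝ (Set.range fun n => y n + ind n),
      ∀ w ∈ Submodule.span ℝ (Set.range fun n => y n + ind n),
      min ‖u - w‖ ‖u + w‖ ≤ 6 * a⁻¹ * γ⁻¹ * ‖|u| - |w|‖ := by
    intro u hu w hw
    obtain ⟨cu, hcu⟩ := Finsupp.mem_span_range_iff_exists_finsupp.mp hu
    obtain ⟨cw, hcw⟩ := Finsupp.mem_span_range_iff_exists_finsupp.mp hw
    have hu' : u = ∑ j ∈ cu.support ∪ cw.support, cu j • (y j + ind j) := by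
      rw [← hcu, Finsupp.sum]
      exact Finset.sum_subset Finset.subset_union_left
        (fun j _ hj => by rw [Finsupp.notMem_support_iff.mp hj, zero_smul])
    have hw' : w = ∑ j ∈ cu.support ∪ cw.support, cw j • (y j + ind j) := by
      rw [← hcw, Finsupp.sum]
      exact Finset.sum_subset Finset.subset_union_right
        (fun j _ hj => by rw [Finsupp.notMem_support_iff.mp hj, zero_smul])
    rw [hu', hw']
    exact key_ineq y h_supp h_on h_indep a γ ha hγ h_prob (cu.support ∪ cw.support) cu cw
  -- pass to the closure
  have hf' : f ∈ closure (Submodule.span ℝ (Set.range fun n => y n + ind n) : Set _) := by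
    rw [← Submodule.topologicalClosure_coe]; exact hf
  have hg' : g ∈ closure (Submodule.span ℝ (Set.range fun n => y n + ind n) : Set _) := by
    rw [← Submodule.topologicalClosure_coe]; exact hg
  obtain ⟨u, hu_mem, hu_lim⟩ := mem_closure_iff_seq_limit.mp hf'
  obtain ⟨v, hv_mem, hv_lim⟩ := mem_closure_iff_seq_limit.mp hg'
  have habs_u : Filter.Tendsto (fun n => |u n|) Filter.atTop (nhds |f|) := by
    rw [tendsto_iff_dist_tendsto_zero]
    refine squeeze_zero (fun n => dist_nonneg) (fun n => ?_)
      (tendsto_iff_dist_tendsto_zero.mp hu_lim)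
    rw [dist_eq_norm, dist_eq_norm]
    exact norm_abs_sub_abs _ _
  have habs_v : Filter.Tendsto (fun n => |v n|) Filter.atTop (nhds |g|) := by
    rw [tendsto_iff_dist_tendsto_zero]
    refine squeeze_zero (fun n => dist_nonneg) (fun n => ?_)
      (tendsto_iff_dist_tendsto_zero.mp hv_lim)
    rw [dist_eq_norm, dist_eq_norm]
    exact norm_abs_sub_abs _ _
  have h1 : Filter.Tendsto (fun n => min ‖u n - v n‖ ‖u n + v n‖) Filter.atTop
      (nhds (min ‖f - g‖ ‖f + g‖)) :=
    ((hu_lim.sub hv_lim).norm).min ((hu_lim.add hv_lim).norm)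
  have h2 : Filter.Tendsto (fun n => 6 * a⁻¹ * γ⁻¹ * ‖|u n| - |v n|‖) Filter.atTop
      (nhds (6 * a⁻¹ * γ⁻¹ * ‖|f| - |g|‖)) :=
    ((habs_u.sub habs_v).norm).const_mul _
  exact le_of_tendsto_of_tendsto' h1 h2 (fun n => hspan (u n) (hu_mem n) (v n) (hv_mem n))
end

section
/- Let Y ⊆ L²([0,1]) be a set of random variables such that there exist a,γ > 0 with Prob(|x| ≥ a‖x‖_{L²}) ≥ γ for all x ∈ Y. Let x,y ∈ Y be independent random variables with ‖x‖_{L²} ≥ ‖y‖_{L²}. Then 2aγ‖y‖_{L²} ≤ ‖ |x+y| − |x−y| ‖_{L²([0,1])}. -/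
/-!
Let `A` and `B` be the events `a‖x‖ ≤ |x|` and `a‖y‖ ≤ |y|`. On `A ∩ B` both `|x|` and `|y|` are at
least `a‖y‖`, and `||u + v| - |u - v|| = 2 min(|u|, |v|)`, so `||x + y| - |x - y||` is at least
`2a‖y‖` there. By independence `Prob(A ∩ B) = Prob(A) Prob(B) ≥ γ²`, hence the `L²` norm of
`|x + y| - |x - y|` is at least `2a‖y‖ · γ`.
-/

open MeasureTheory ProbabilityTheory
open scoped ENNReal

noncomputable section

theorem abs_abs_add_sub_abs_sub (u v : ℝ) : |(|u + v| - |u - v|)| = 2 * min |u| |v| := by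
  rcases abs_cases u with ⟨_, _⟩ | ⟨_, _⟩ <;> rcases abs_cases v with ⟨_, _⟩ | ⟨_, _⟩ <;>
  rcases abs_cases (u + v) with ⟨_, _⟩ | ⟨_, _⟩ <;>
  rcases abs_cases (u - v) with ⟨_, _⟩ | ⟨_, _⟩ <;>
  rcases abs_cases (|u + v| - |u - v|) with ⟨_, _⟩ | ⟨_, _⟩ <;>
  rcases min_cases |u| |v| with ⟨_, _⟩ | ⟨_, _⟩ <;> linarith

section LpLowerBound

variable {α : Type*} [MeasurableSpace α] {μ : Measure α} {p : ℝ≥0∞} {s : Set α}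

theorem mul_measure_rpow_le_eLpNorm {ε : Type*} [TopologicalSpace ε] [ContinuousENorm ε]
    (hp : p ≠ 0) (hp_top : p ≠ ∞) {f : α → ε} (hs : MeasurableSet s) {c : ℝ≥0∞}
    (hf : ∀ᵐ t ∂μ, t ∈ s → c ≤ ‖f t‖ₑ) :
    c * μ s ^ (1 / p.toReal) ≤ eLpNorm f p μ := by
  rw [← enorm_eq_self c, ← eLpNorm_indicator_const hs hp hp_top]
  refine eLpNorm_mono_enorm_ae (hf.mono fun t ht => ?_)
  by_cases hts : t ∈ s
  · simpa [hts] using ht hts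
  · simp [hts]

theorem Lp.mul_le_norm_of_le_norm_on {E : Type*} [NormedAddCommGroup E] [Fact (1 ≤ p)]
    (hp_top : p ≠ ∞) (f : Lp E p μ) (hs : MeasurableSet s) {c γ : ℝ} (hc : 0 ≤ c)
    (hμs : ENNReal.ofReal γ ^ p.toReal ≤ μ s) (hf : ∀ᵐ t ∂μ, t ∈ s → c ≤ ‖f t‖) :
    c * γ ≤ ‖f‖ := by
  have hp : p ≠ 0 := (zero_lt_one.trans_le Fact.out).ne'
  have hγ : ENNReal.ofReal γ ≤ μ s ^ (1 / p.toReal) := by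
    rwa [one_div, ENNReal.le_rpow_inv_iff (ENNReal.toReal_pos hp hp_top)]
  have hf_enorm : ∀ᵐ t ∂μ, t ∈ s → ENNReal.ofReal c ≤ ‖f t‖ₑ := hf.mono fun t ht hts => by
    rw [← ofReal_norm]
    exact ENNReal.ofReal_le_ofReal (ht hts)
  rw [Lp.norm_def, ← ENNReal.ofReal_le_iff_le_toReal (Lp.eLpNorm_ne_top f),
    ENNReal.ofReal_mul hc]
  calc ENNReal.ofReal c * ENNReal.ofReal γ
      ≤ ENNReal.ofReal c * μ s ^ (1 / p.toReal) := by gcongr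
    _ ≤ eLpNorm f p μ := mul_measure_rpow_le_eLpNorm hp hp_top hs hf_enorm

end LpLowerBound

theorem lower_bound_of_independent_general
    (Y : Set (Lp ℝ 2 μ01)) (a γ : ℝ) (ha : 0 < a)
    (hY : ∀ z ∈ Y, ENNReal.ofReal γ ≤ μ01 {t | a * ‖z‖ ≤ |(z : ℝ → ℝ) t|})
    (x y : Lp ℝ 2 μ01) (hx : x ∈ Y) (hy : y ∈ Y)
    (h_indep : IndepFun ((x : ℝ → ℝ)) ((y : ℝ → ℝ)) μ01)
    (h_norm : ‖y‖ ≤ ‖x‖) :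
    2 * a * γ * ‖y‖ ≤ ‖|x + y| - |x - y|‖ := by
  have measurableSet_le_abs (r : ℝ) : MeasurableSet {u : ℝ | r ≤ |u|} :=
    measurableSet_le measurable_const measurable_id.abs
  set S := (x : ℝ → ℝ) ⁻¹' {u | a * ‖x‖ ≤ |u|} ∩ (y : ℝ → ℝ) ⁻¹' {u | a * ‖y‖ ≤ |u|}
  have hS : MeasurableSet S :=
    ((Lp.stronglyMeasurable x).measurable (measurableSet_le_abs _)).inter
      ((Lp.stronglyMeasurable y).measurable (measurableSet_le_abs _))
  have hμS : ENNReal.ofReal γ ^ (2 : ℝ≥0∞).toReal ≤ μ01 S := by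
    rw [h_indep.measure_inter_preimage_eq_mul _ _ (measurableSet_le_abs _) (measurableSet_le_abs _),
      ENNReal.toReal_ofNat, ENNReal.rpow_two, sq]
    exact mul_le_mul' (hY x hx) (hY y hy)
  have hbound : ∀ᵐ t ∂μ01, t ∈ S → 2 * a * ‖y‖ ≤ ‖(|x + y| - |x - y| : Lp ℝ 2 μ01) t‖ := by
    filter_upwards [Lp.coeFn_sub |x + y| |x - y|, Lp.coeFn_abs (x + y), Lp.coeFn_abs (x - y),
      Lp.coeFn_add x y, Lp.coeFn_sub x y] with t hdiff habs_add habs_sub hadd hsub ⟨hxt, hyt⟩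
    simp only [Pi.sub_apply, Pi.add_apply] at hdiff habs_add habs_sub hadd hsub ⊢
    rw [hdiff, habs_add, habs_sub, hadd, hsub, Real.norm_eq_abs, abs_abs_add_sub_abs_sub, mul_assoc]
    exact mul_le_mul_of_nonneg_left
      (le_min ((mul_le_mul_of_nonneg_left h_norm ha.le).trans hxt) hyt) zero_le_two
  calc 2 * a * γ * ‖y‖ = 2 * a * ‖y‖ * γ := by ring
    _ ≤ ‖|x + y| - |x - y|‖ :=
      Lp.mul_le_norm_of_le_norm_on ENNReal.ofNat_ne_top _ hS (by positivity) hμS hbound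

/-- Lemma 2.3: if `Y ⊆ L²([0,1])` satisfies `Prob(|z| ≥ a‖z‖) ≥ γ` for all `z ∈ Y`, and `x, y ∈ Y`
are independent with `‖x‖ ≥ ‖y‖`, then `2aγ‖y‖ ≤ ‖|x+y| - |x-y|‖`. -/
theorem lower_bound_of_independent
    (Y : Set (Lp ℝ 2 μ01)) (a γ : ℝ) (ha : 0 < a) (hγ : 0 < γ)
    (hY : ∀ z ∈ Y, ENNReal.ofReal γ ≤ μ01 {t | a * ‖z‖ ≤ |(z : ℝ → ℝ) t|})
    (x y : Lp ℝ 2 μ01) (hx : x ∈ Y) (hy : y ∈ Y)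
    (h_indep : IndepFun ((x : ℝ → ℝ)) ((y : ℝ → ℝ)) μ01)
    (h_norm : ‖y‖ ≤ ‖x‖) :
    2 * a * γ * ‖y‖ ≤ ‖|x + y| - |x - y|‖ :=
  lower_bound_of_independent_general Y a γ ha hY x y hx hy h_indep h_norm
end
end

section
/- Let x ∈ L²([0,1]) and suppose there exist 1 ≤ p < 2 and a constant 0 < A ≤ 1 with ‖x‖_{L^p([0,1])} ≥ A‖x‖_{L²([0,1])}. Then for every 0 < a < A, Prob(|x| ≥ a‖x‖_{L²}) ≥ (A^p − a^p)^{2/(2−p)}. -/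
open MeasureTheory
open scoped ENNReal NNReal

noncomputable section

/-- Lemma 3.2: if `x ∈ L²([0,1])` satisfies `‖x‖_{L^p} ≥ A ‖x‖_{L²}` for some `1 ≤ p < 2` and
`0 < A ≤ 1`, then for every `0 < a < A`,
`Prob(|x| ≥ a‖x‖_{L²}) ≥ (A^p - a^p)^{2/(2-p)}`. -/
theorem prob_lower_bound_of_lower_p_norm_bound
    (x : ℝ → ℝ) (hx : MemLp x 2 μ01)
    (p : ℝ) (hp1 : 1 ≤ p) (hp2 : p < 2) (A : ℝ) (hA0 : 0 < A) (hA1 : A ≤ 1)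
    (hpA : ENNReal.ofReal A * eLpNorm x 2 μ01 ≤ eLpNorm x (ENNReal.ofReal p) μ01)
    (a : ℝ) (ha0 : 0 < a) (haA : a < A) :
    ENNReal.ofReal ((A ^ p - a ^ p) ^ (2 / (2 - p))) ≤
      μ01 {t | a * (eLpNorm x 2 μ01).toReal ≤ |x t|} := by
  have hp0 : (0:ℝ) < p := lt_of_lt_of_le one_pos hp1
  have h2p : (0:ℝ) < 2 - p := by linarith
  have hap0 : (0:ℝ) ≤ a ^ p := Real.rpow_nonneg ha0.le p
  have hapAp : a ^ p ≤ A ^ p := Real.rpow_le_rpow ha0.le haA.le hp0.le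
  have hsub0 : (0:ℝ) ≤ A ^ p - a ^ p := by linarith
  have hμuniv : μ01 Set.univ = 1 := by
    simp [μ01, Real.volume_Icc]
  -- the trivial case ‖x‖₂ = 0
  by_cases h0 : eLpNorm x 2 μ01 = 0
  · have hM : (eLpNorm x 2 μ01).toReal = 0 := by rw [h0]; simp
    have hset : {t | a * (eLpNorm x 2 μ01).toReal ≤ |x t|} = Set.univ := by
      ext t; simp [hM, abs_nonneg]
    rw [hset, hμuniv]
    have hA1p : A ^ p ≤ 1 := Real.rpow_le_one hA0.le hA1 hp0.le
    exact ENNReal.ofReal_le_one.2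
      (Real.rpow_le_one (by linarith) (by linarith) (by positivity))
  -- measurable representative
  set M := (eLpNorm x 2 μ01).toReal with hMdef
  obtain ⟨g, hgm, hgx⟩ : ∃ g, StronglyMeasurable g ∧ x =ᵐ[μ01] g :=
    ⟨hx.1.mk x, hx.1.stronglyMeasurable_mk, hx.1.ae_eq_mk⟩
  have hgmeas : Measurable g := hgm.measurable
  set E : Set ℝ := {t | a * M ≤ |g t|} with hE
  have hEmeas : MeasurableSet E := measurableSet_le measurable_const hgmeas.abs
  have hsetE : μ01 {t | a * M ≤ |x t|} = μ01 E := by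
    apply measure_congr
    rw [Filter.eventuallyEq_set]
    filter_upwards [hgx] with t ht
    simp [hE, ht]
  rw [hsetE]
  have heq2 : eLpNorm g 2 μ01 = eLpNorm x 2 μ01 := (eLpNorm_congr_ae hgx).symm
  have heqp : eLpNorm g (ENNReal.ofReal p) μ01 = eLpNorm x (ENNReal.ofReal p) μ01 :=
    (eLpNorm_congr_ae hgx).symm
  set I2 : ℝ≥0∞ := ∫⁻ t, (‖g t‖₊ : ℝ≥0∞) ^ (2:ℝ) ∂μ01 with hI2def
  set Ip : ℝ≥0∞ := ∫⁻ t, (‖g t‖₊ : ℝ≥0∞) ^ p ∂μ01 with hIpdef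
  have h2 : eLpNorm x 2 μ01 = I2 ^ (1/2 : ℝ) := by
    rw [← heq2, eLpNorm_eq_lintegral_rpow_enorm_toReal two_ne_zero ENNReal.ofNat_ne_top]
    norm_num [hI2def]
    rfl
  have hpe : eLpNorm x (ENNReal.ofReal p) μ01 = Ip ^ (1/p : ℝ) := by
    rw [← heqp, eLpNorm_eq_lintegral_rpow_enorm_toReal (by simp [hp0]) ENNReal.ofReal_ne_top,
      ENNReal.toReal_ofReal hp0.le]
    rfl
  have hI2top : I2 ≠ ∞ := by
    intro h
    have := hx.2
    rw [h2, h] at this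
    simp [ENNReal.top_rpow_of_pos (by norm_num : (0:ℝ) < 1/2)] at this
  have hI20 : I2 ≠ 0 := by
    intro h
    apply h0
    rw [h2, h, ENNReal.zero_rpow_of_pos (by norm_num)]
  -- Hölder on E
  have hconj : (2/p : ℝ).HolderConjugate (2/(2-p)) := by
    rw [Real.holderConjugate_iff]
    constructor
    · rw [lt_div_iff₀ hp0]; linarith
    · rw [inv_div, inv_div]; ring
  have hFmeas : Measurable fun t => (‖g t‖₊ : ℝ≥0∞) ^ p := hgmeas.enorm.pow_const p
  have holder : ∫⁻ t in E, (‖g t‖₊ : ℝ≥0∞) ^ p ∂μ01 ≤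
      I2 ^ (p/2 : ℝ) * (μ01 E) ^ ((2-p)/2 : ℝ) := by
    have h := ENNReal.lintegral_mul_le_Lp_mul_Lq μ01 hconj
      hFmeas.aemeasurable ((measurable_one.indicator hEmeas).aemeasurable :
        AEMeasurable (E.indicator (fun _ => (1:ℝ≥0∞))) μ01)
    simp only [Pi.mul_apply] at h
    calc ∫⁻ t in E, (‖g t‖₊ : ℝ≥0∞) ^ p ∂μ01
        = ∫⁻ t, (‖g t‖₊ : ℝ≥0∞) ^ p * E.indicator (fun _ => (1:ℝ≥0∞)) t ∂μ01 := by
          rw [← lintegral_indicator hEmeas _]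
          refine lintegral_congr fun t => ?_
          by_cases ht : t ∈ E <;> simp [ht]
      _ ≤ (∫⁻ t, ((‖g t‖₊ : ℝ≥0∞) ^ p) ^ (2/p : ℝ) ∂μ01) ^ (1 / (2/p) : ℝ) *
          (∫⁻ t, (E.indicator (fun _ => (1:ℝ≥0∞)) t) ^ (2/(2-p) : ℝ) ∂μ01) ^
            (1 / (2/(2-p)) : ℝ) := h
      _ = I2 ^ (p/2 : ℝ) * (μ01 E) ^ ((2-p)/2 : ℝ) := by
          congr 1
          · congr 1
            · refine lintegral_congr fun t => ?_
              rw [← ENNReal.rpow_mul]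
              congr 1
              field_simp
            · rw [one_div_div]
          · rw [one_div_div]
            congr 1
            have hpt : ∀ t, (E.indicator (fun _ => (1:ℝ≥0∞)) t) ^ (2/(2-p) : ℝ)
                = E.indicator (fun _ => (1:ℝ≥0∞)) t := by
              intro t
              by_cases ht : t ∈ E <;>
                simp [ht, ENNReal.zero_rpow_of_pos (by positivity : (0:ℝ) < 2/(2-p))]
            rw [lintegral_congr hpt, lintegral_indicator hEmeas _]
            exact setLIntegral_one E
  -- bound on the complement
  have hcompl : ∫⁻ t in Eᶜ, (‖g t‖₊ : ℝ≥0∞) ^ p ∂μ01 ≤ (ENNReal.ofReal (a*M)) ^ p := by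
    calc ∫⁻ t in Eᶜ, (‖g t‖₊ : ℝ≥0∞) ^ p ∂μ01
        ≤ ∫⁻ _ in Eᶜ, (ENNReal.ofReal (a*M)) ^ p ∂μ01 := by
          refine setLIntegral_mono measurable_const fun t ht => ?_
          have hlt : |g t| ≤ a * M := le_of_not_ge ht
          have : (‖g t‖₊ : ℝ≥0∞) = ENNReal.ofReal |g t| := by
            rw [← enorm_eq_nnnorm, Real.enorm_eq_ofReal_abs]
          rw [this]
          exact ENNReal.rpow_le_rpow (ENNReal.ofReal_le_ofReal hlt) hp0.le
      _ = (ENNReal.ofReal (a*M)) ^ p * μ01 Eᶜ := setLIntegral_const _ _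
      _ ≤ (ENNReal.ofReal (a*M)) ^ p * 1 := by
          gcongr
          rw [← hμuniv]
          exact measure_mono (Set.subset_univ _)
      _ = (ENNReal.ofReal (a*M)) ^ p := mul_one _
  -- lower bound on Ip
  have hIplb : (ENNReal.ofReal A) ^ p * I2 ^ (p/2 : ℝ) ≤ Ip := by
    have h := hpA
    rw [h2, hpe] at h
    calc (ENNReal.ofReal A) ^ p * I2 ^ (p/2 : ℝ)
        = (ENNReal.ofReal A * I2 ^ (1/2 : ℝ)) ^ p := by
          rw [ENNReal.mul_rpow_of_nonneg _ _ hp0.le, ← ENNReal.rpow_mul]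
          congr 1
          ring
      _ ≤ (Ip ^ (1/p : ℝ)) ^ p := ENNReal.rpow_le_rpow h hp0.le
      _ = Ip := by rw [← ENNReal.rpow_mul, one_div_mul_cancel hp0.ne', ENNReal.rpow_one]
  have hM2 : ENNReal.ofReal M = I2 ^ (1/2 : ℝ) := by
    rw [hMdef, h2, ENNReal.ofReal_toReal]
    exact ENNReal.rpow_ne_top_of_nonneg (by norm_num) hI2top
  have haM : (ENNReal.ofReal (a*M)) ^ p = (ENNReal.ofReal a) ^ p * I2 ^ (p/2 : ℝ) := by
    rw [ENNReal.ofReal_mul ha0.le, ENNReal.mul_rpow_of_nonneg _ _ hp0.le, hM2,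
      ← ENNReal.rpow_mul]
    congr 2
    ring
  have hsplit : Ip = (∫⁻ t in E, (‖g t‖₊ : ℝ≥0∞) ^ p ∂μ01)
      + ∫⁻ t in Eᶜ, (‖g t‖₊ : ℝ≥0∞) ^ p ∂μ01 := (lintegral_add_compl _ hEmeas).symm
  have key : (ENNReal.ofReal A) ^ p * I2 ^ (p/2 : ℝ) ≤
      ((μ01 E) ^ ((2-p)/2 : ℝ) + (ENNReal.ofReal a) ^ p) * I2 ^ (p/2 : ℝ) := by
    calc (ENNReal.ofReal A) ^ p * I2 ^ (p/2 : ℝ) ≤ Ip := hIplb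
      _ = _ + _ := hsplit
      _ ≤ I2 ^ (p/2 : ℝ) * (μ01 E) ^ ((2-p)/2 : ℝ)
          + (ENNReal.ofReal a) ^ p * I2 ^ (p/2 : ℝ) :=
        add_le_add holder (hcompl.trans_eq haM)
      _ = ((μ01 E) ^ ((2-p)/2 : ℝ) + (ENNReal.ofReal a) ^ p) * I2 ^ (p/2 : ℝ) := by ring
  have hC0 : I2 ^ (p/2 : ℝ) ≠ 0 :=
    (ENNReal.rpow_pos (lt_of_le_of_ne zero_le (Ne.symm hI20)) hI2top).ne'
  have hCtop : I2 ^ (p/2 : ℝ) ≠ ∞ :=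
    ENNReal.rpow_ne_top_of_nonneg (by positivity) hI2top
  have key2 : (ENNReal.ofReal A) ^ p ≤ (μ01 E) ^ ((2-p)/2 : ℝ) + (ENNReal.ofReal a) ^ p :=
    (ENNReal.mul_le_mul_iff_left hC0 hCtop).mp key
  have key3 : ENNReal.ofReal (A ^ p - a ^ p) ≤ (μ01 E) ^ ((2-p)/2 : ℝ) := by
    rw [ENNReal.ofReal_sub _ hap0, tsub_le_iff_right]
    calc ENNReal.ofReal (A ^ p) = (ENNReal.ofReal A) ^ p := by
          rw [← ENNReal.ofReal_rpow_of_pos hA0]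
      _ ≤ (μ01 E) ^ ((2-p)/2 : ℝ) + (ENNReal.ofReal a) ^ p := key2
      _ = (μ01 E) ^ ((2-p)/2 : ℝ) + ENNReal.ofReal (a ^ p) := by
          rw [ENNReal.ofReal_rpow_of_pos ha0]
  have hfin := ENNReal.rpow_le_rpow key3 (by positivity : (0:ℝ) ≤ 2/(2-p))
  rw [← ENNReal.rpow_mul] at hfin
  have hexp : ((2-p)/2 : ℝ) * (2/(2-p)) = 1 := by field_simp
  rw [hexp, ENNReal.rpow_one] at hfin
  calc ENNReal.ofReal ((A ^ p - a ^ p) ^ (2/(2-p)))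
      = (ENNReal.ofReal (A ^ p - a ^ p)) ^ (2/(2-p) : ℝ) :=
        (ENNReal.ofReal_rpow_of_nonneg hsub0 (by positivity)).symm
    _ ≤ μ01 E := hfin
end
end

section
/- There exists a universal constant A₁ > 0 (a Khintchine constant: for all N and real scalars (a_j)_{j=1}^N, E|Σ_{j=1}^N a_j r_j| ≥ A₁(Σ_{j=1}^N a_j²)^{1/2} where (r_j) are independent ±1 Rademacher variables) such that the following holds. Let (y_j)_{j=1}^∞ be an orthonormal sequence of independent, mean-zero random variables in L²([0,1]) and suppose there exists c > 0 with ‖y_j‖_{L¹([0,1])} ≥ c for all j. Then ‖x‖_{L¹([0,1])} ≥ (1/2) c A₁ ‖x‖_{L²([0,1])} for every x in the closed span of (y_j)_{j=1}^∞ in L²([0,1]). -/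
open MeasureTheory ProbabilityTheory

noncomputable section

open Finset
open scoped ENNReal NNReal

namespace L1L2Aux

variable {Ω : Type*} [MeasurableSpace Ω] {μ : Measure Ω}

lemma integrable_of_ae_bound [IsFiniteMeasure μ] {h : Ω → ℝ} (C : ℝ)
    (hm : AEStronglyMeasurable h μ) (hb : ∀ᵐ ω ∂μ, |h ω| ≤ C) : Integrable h μ :=
  Integrable.mono' (integrable_const C) hm (by simpa [Real.norm_eq_abs] using hb)

/-- Cauchy–Schwarz for integrals. -/
lemma sq_integral_mul_le {f g : Ω → ℝ} (hf : MemLp f 2 μ) (hg : MemLp g 2 μ) :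
    (∫ ω, f ω * g ω ∂μ) ^ 2 ≤ (∫ ω, f ω ^ 2 ∂μ) * (∫ ω, g ω ^ 2 ∂μ) := by
  set F := hf.toLp f with hF
  set G := hg.toLp g with hG
  have h1 : (inner ℝ F G : ℝ) = ∫ ω, f ω * g ω ∂μ := by
    rw [L2.inner_def]
    refine integral_congr_ae ?_
    filter_upwards [hf.coeFn_toLp, hg.coeFn_toLp] with ω h1 h2
    simp [hF, hG, h1, h2, RCLike.inner_apply, mul_comm]
  have h2 : (inner ℝ F F : ℝ) = ∫ ω, f ω ^ 2 ∂μ := by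
    rw [L2.inner_def]
    refine integral_congr_ae ?_
    filter_upwards [hf.coeFn_toLp] with ω h1
    simp [hF, h1, RCLike.inner_apply, sq]
  have h3 : (inner ℝ G G : ℝ) = ∫ ω, g ω ^ 2 ∂μ := by
    rw [L2.inner_def]
    refine integral_congr_ae ?_
    filter_upwards [hg.coeFn_toLp] with ω h1
    simp [hG, h1, RCLike.inner_apply, sq]
  have := real_inner_mul_inner_self_le F G
  rw [h1, h2, h3] at this
  nlinarith [this]

lemma integral_abs_le_sqrt [IsProbabilityMeasure μ] {f : Ω → ℝ} (hf : MemLp f 2 μ) :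
    ∫ ω, |f ω| ∂μ ≤ Real.sqrt (∫ ω, f ω ^ 2 ∂μ) := by
  have habs : MemLp (fun ω => |f ω|) 2 μ := by
    simpa [Real.norm_eq_abs] using hf.norm
  have hone : MemLp (fun _ : Ω => (1:ℝ)) 2 μ := memLp_const 1
  have h := sq_integral_mul_le habs hone
  have h2 : (∫ ω, |f ω| ∂μ) ^ 2 ≤ ∫ ω, f ω ^ 2 ∂μ := by
    simpa [sq_abs] using h
  have hnn : 0 ≤ ∫ ω, |f ω| ∂μ := integral_nonneg (fun ω => abs_nonneg _)
  calc ∫ ω, |f ω| ∂μ = Real.sqrt ((∫ ω, |f ω| ∂μ) ^ 2) := by rw [Real.sqrt_sq hnn]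
    _ ≤ Real.sqrt (∫ ω, f ω ^ 2 ∂μ) := Real.sqrt_le_sqrt h2


section Khintchine

variable {ι : Type*} [IsProbabilityMeasure μ] {r : ι → Ω → ℝ}

lemma moments (hmeas : ∀ j, Measurable (r j))
    (hindep : iIndepFun r μ)
    (hmean : ∀ j, ∫ ω, r j ω ∂μ = 0)
    (habs : ∀ j, ∀ᵐ ω ∂μ, |r j ω| = 1)
    (c : ι → ℝ) (s : Finset ι) :
    (∫ ω, (∑ j ∈ s, c j * r j ω) ^ 2 ∂μ = ∑ j ∈ s, (c j) ^ 2) ∧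
    (∫ ω, (∑ j ∈ s, c j * r j ω) ^ 4 ∂μ ≤ 3 * (∑ j ∈ s, (c j) ^ 2) ^ 2) := by
  classical
  have hfmeas : ∀ j, Measurable (fun ω => c j * r j ω) := fun j => (hmeas j).const_mul _
  have hfindep : iIndepFun (fun j ω => c j * r j ω) μ :=
    hindep.comp (fun j (t : ℝ) => c j * t) (fun j => measurable_id.const_mul _)
  have hSbd : ∀ t : Finset ι, ∀ᵐ ω ∂μ, |∑ j ∈ t, c j * r j ω| ≤ ∑ j ∈ t, |c j| := by
    intro t
    have h1 : ∀ᵐ ω ∂μ, ∀ j ∈ t, |r j ω| = 1 :=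
      (Filter.eventually_all_finset t).2 fun j _ => habs j
    filter_upwards [h1] with ω hω
    calc |∑ j ∈ t, c j * r j ω| ≤ ∑ j ∈ t, |c j * r j ω| := Finset.abs_sum_le_sum_abs _ _
      _ = ∑ j ∈ t, |c j| := by
        refine Finset.sum_congr rfl fun j hj => ?_
        rw [abs_mul, hω j hj, mul_one]
  have hSmeas : ∀ t : Finset ι, Measurable (fun ω => ∑ j ∈ t, c j * r j ω) :=
    fun t => Finset.measurable_sum t fun j _ => hfmeas j
  have hfbd : ∀ a : ι, ∀ᵐ ω ∂μ, |c a * r a ω| ≤ |c a| := by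
    intro a
    filter_upwards [habs a] with ω hω
    rw [abs_mul, hω, mul_one]
  have hSint : ∀ (t : Finset ι) (k : ℕ),
      Integrable (fun ω => (∑ j ∈ t, c j * r j ω) ^ k) μ := by
    intro t k
    refine integrable_of_ae_bound ((∑ j ∈ t, |c j|) ^ k)
      ((hSmeas t).pow_const k).aestronglyMeasurable ?_
    filter_upwards [hSbd t] with ω h1
    rw [abs_pow]
    exact pow_le_pow_left₀ (abs_nonneg _) h1 k
  have hSXint : ∀ (t : Finset ι) (a : ι) (k m : ℕ),
      Integrable (fun ω => (∑ j ∈ t, c j * r j ω) ^ k * (c a * r a ω) ^ m) μ := by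
    intro t a k m
    refine integrable_of_ae_bound ((∑ j ∈ t, |c j|) ^ k * |c a| ^ m)
      (((hSmeas t).pow_const k).mul ((hfmeas a).pow_const m)).aestronglyMeasurable ?_
    filter_upwards [hSbd t, hfbd a] with ω h1 h2
    rw [abs_mul, abs_pow, abs_pow]
    have hBnn : (0:ℝ) ≤ ∑ j ∈ t, |c j| := Finset.sum_nonneg fun j _ => abs_nonneg _
    exact mul_le_mul (pow_le_pow_left₀ (abs_nonneg _) h1 k)
      (pow_le_pow_left₀ (abs_nonneg _) h2 m) (pow_nonneg (abs_nonneg _) m)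
      (pow_nonneg hBnn k)
  -- moments of singles
  have hr2 : ∀ a : ι, ∀ᵐ ω ∂μ, (r a ω) ^ 2 = 1 := by
    intro a
    filter_upwards [habs a] with ω hω
    rw [← sq_abs, hω, one_pow]
  have hf1 : ∀ a : ι, ∫ ω, (c a * r a ω) ^ 1 ∂μ = 0 := by
    intro a
    simp only [pow_one]
    rw [integral_const_mul, hmean a, mul_zero]
  have hf2 : ∀ a : ι, ∫ ω, (c a * r a ω) ^ 2 ∂μ = (c a) ^ 2 := by
    intro a
    have h : ∀ᵐ ω ∂μ, (c a * r a ω) ^ 2 = (c a) ^ 2 := by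
      filter_upwards [hr2 a] with ω hω
      rw [mul_pow, hω, mul_one]
    rw [integral_congr_ae h]
    simp
  have hf3 : ∀ a : ι, ∫ ω, (c a * r a ω) ^ 3 ∂μ = 0 := by
    intro a
    have h : ∀ᵐ ω ∂μ, (c a * r a ω) ^ 3 = (c a) ^ 3 * r a ω := by
      filter_upwards [hr2 a] with ω hω
      have h3 : r a ω ^ 3 = r a ω := by linear_combination (r a ω) * hω
      rw [mul_pow, h3]
    rw [integral_congr_ae h, integral_const_mul, hmean a, mul_zero]
  have hf4 : ∀ a : ι, ∫ ω, (c a * r a ω) ^ 4 ∂μ = (c a) ^ 4 := by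
    intro a
    have h : ∀ᵐ ω ∂μ, (c a * r a ω) ^ 4 = (c a) ^ 4 := by
      filter_upwards [hr2 a] with ω hω
      have h4 : r a ω ^ 4 = 1 := by linear_combination (r a ω ^ 2 + 1) * hω
      rw [mul_pow, h4, mul_one]
    rw [integral_congr_ae h]
    simp
  induction s using Finset.induction_on with
  | empty => simp
  | insert a t ha ih =>
    obtain ⟨ih2, ih4⟩ := ih
    have hT0 : (0:ℝ) ≤ ∑ j ∈ t, (c j) ^ 2 := Finset.sum_nonneg fun j _ => sq_nonneg _
    have hSX : IndepFun (fun ω => ∑ j ∈ t, c j * r j ω) (fun ω => c a * r a ω) μ := by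
      have h := hfindep.indepFun_finsetSum_of_notMem hfmeas ha
      have he : (∑ j ∈ t, (fun j ω => c j * r j ω) j) = fun ω => ∑ j ∈ t, c j * r j ω := by
        ext ω; simp [Finset.sum_apply]
      rwa [he] at h
    have hSXk : ∀ k m : ℕ, ∫ ω, (∑ j ∈ t, c j * r j ω) ^ k * (c a * r a ω) ^ m ∂μ =
        (∫ ω, (∑ j ∈ t, c j * r j ω) ^ k ∂μ) * ∫ ω, (c a * r a ω) ^ m ∂μ := by
      intro k m
      refine IndepFun.integral_mul_eq_mul_integral ?_ (hSint t k).aestronglyMeasurable ?_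
      · exact hSX.comp (measurable_id.pow_const k) (measurable_id.pow_const m)
      · have := hSXint ∅ a 0 m
        simpa using this.aestronglyMeasurable
    have hXint : ∀ m : ℕ, Integrable (fun ω => (c a * r a ω) ^ m) μ := by
      intro m
      have := hSXint ∅ a 0 m
      simpa using this
    have hsum2 : (∑ j ∈ insert a t, (c j) ^ 2) = (∑ j ∈ t, (c j) ^ 2) + (c a) ^ 2 := by
      rw [Finset.sum_insert ha]; ring
    constructor
    · have expand : (fun ω => (∑ j ∈ insert a t, c j * r j ω) ^ 2) = fun ω =>
          ((∑ j ∈ t, c j * r j ω) ^ 2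
            + 2 * ((∑ j ∈ t, c j * r j ω) ^ 1 * (c a * r a ω) ^ 1))
            + (c a * r a ω) ^ 2 := by
        funext ω; rw [Finset.sum_insert ha]; ring
      have I2 : Integrable (fun ω => 2 * ((∑ j ∈ t, c j * r j ω) ^ 1 * (c a * r a ω) ^ 1)) μ :=
        (hSXint t a 1 1).const_mul 2
      have I12 : Integrable (fun ω => (∑ j ∈ t, c j * r j ω) ^ 2
          + 2 * ((∑ j ∈ t, c j * r j ω) ^ 1 * (c a * r a ω) ^ 1)) μ := (hSint t 2).add I2
      rw [expand, integral_add I12 (hXint 2),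
        integral_add (hSint t 2) I2, integral_const_mul,
        hSXk 1 1, hf1 a, hf2 a, ih2, hsum2]
      ring
    · have expand : (fun ω => (∑ j ∈ insert a t, c j * r j ω) ^ 4) = fun ω =>
          ((((∑ j ∈ t, c j * r j ω) ^ 4
            + 4 * ((∑ j ∈ t, c j * r j ω) ^ 3 * (c a * r a ω) ^ 1))
            + 6 * ((∑ j ∈ t, c j * r j ω) ^ 2 * (c a * r a ω) ^ 2))
            + 4 * ((∑ j ∈ t, c j * r j ω) ^ 1 * (c a * r a ω) ^ 3))
            + (c a * r a ω) ^ 4 := by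
        funext ω; rw [Finset.sum_insert ha]; ring
      rw [expand]
      have Ia : Integrable (fun ω => 4 * ((∑ j ∈ t, c j * r j ω) ^ 3 * (c a * r a ω) ^ 1)) μ :=
        (hSXint t a 3 1).const_mul 4
      have Ib : Integrable (fun ω => 6 * ((∑ j ∈ t, c j * r j ω) ^ 2 * (c a * r a ω) ^ 2)) μ :=
        (hSXint t a 2 2).const_mul 6
      have Ic : Integrable (fun ω => 4 * ((∑ j ∈ t, c j * r j ω) ^ 1 * (c a * r a ω) ^ 3)) μ :=
        (hSXint t a 1 3).const_mul 4
      have I1 : Integrable (fun ω => (∑ j ∈ t, c j * r j ω) ^ 4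
          + 4 * ((∑ j ∈ t, c j * r j ω) ^ 3 * (c a * r a ω) ^ 1)) μ := (hSint t 4).add Ia
      have I2 : Integrable (fun ω => ((∑ j ∈ t, c j * r j ω) ^ 4
          + 4 * ((∑ j ∈ t, c j * r j ω) ^ 3 * (c a * r a ω) ^ 1))
          + 6 * ((∑ j ∈ t, c j * r j ω) ^ 2 * (c a * r a ω) ^ 2)) μ := I1.add Ib
      have I3 : Integrable (fun ω => (((∑ j ∈ t, c j * r j ω) ^ 4
          + 4 * ((∑ j ∈ t, c j * r j ω) ^ 3 * (c a * r a ω) ^ 1))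
          + 6 * ((∑ j ∈ t, c j * r j ω) ^ 2 * (c a * r a ω) ^ 2))
          + 4 * ((∑ j ∈ t, c j * r j ω) ^ 1 * (c a * r a ω) ^ 3)) μ := I2.add Ic
      rw [integral_add I3 (hXint 4), integral_add I2 Ic, integral_add I1 Ib,
          integral_add (hSint t 4) Ia]
      rw [integral_const_mul, integral_const_mul, integral_const_mul,
        hSXk 3 1, hSXk 2 2, hSXk 1 3, hf1 a, hf2 a, hf3 a, hf4 a, ih2, hsum2]
      have hc2 : (0:ℝ) ≤ (c a) ^ 2 := sq_nonneg _
      nlinarith [ih4, hT0, hc2, sq_nonneg ((∑ j ∈ t, (c j) ^ 2) - (c a) ^ 2)]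

lemma khintchine_lower (hmeas : ∀ j, Measurable (r j))
    (hindep : iIndepFun r μ)
    (hmean : ∀ j, ∫ ω, r j ω ∂μ = 0)
    (habs : ∀ j, ∀ᵐ ω ∂μ, |r j ω| = 1)
    (c : ι → ℝ) (s : Finset ι) :
    (Real.sqrt 3)⁻¹ * Real.sqrt (∑ j ∈ s, (c j) ^ 2) ≤ ∫ ω, |∑ j ∈ s, c j * r j ω| ∂μ := by
  classical
  obtain ⟨h2, h4⟩ := moments hmeas hindep hmean habs c s
  set T := ∑ j ∈ s, (c j) ^ 2 with hT
  have hT0 : (0:ℝ) ≤ T := Finset.sum_nonneg fun j _ => sq_nonneg _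
  set S := fun ω => ∑ j ∈ s, c j * r j ω with hS
  have hSmeas : Measurable S := Finset.measurable_sum s fun j _ => (hmeas j).const_mul _
  have hSbd : ∀ᵐ ω ∂μ, |S ω| ≤ ∑ j ∈ s, |c j| := by
    have h1 : ∀ᵐ ω ∂μ, ∀ j ∈ s, |r j ω| = 1 :=
      (Filter.eventually_all_finset s).2 fun j _ => habs j
    filter_upwards [h1] with ω hω
    calc |S ω| ≤ ∑ j ∈ s, |c j * r j ω| := Finset.abs_sum_le_sum_abs _ _
      _ = ∑ j ∈ s, |c j| := by
        refine Finset.sum_congr rfl fun j hj => ?_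
        rw [abs_mul, hω j hj, mul_one]
  set B := ∑ j ∈ s, |c j| with hB
  have hBnn : (0:ℝ) ≤ B := Finset.sum_nonneg fun j _ => abs_nonneg _
  have hmem : ∀ k : ℕ, MemLp (fun ω => |S ω| ^ k) 2 μ := by
    intro k
    refine MemLp.of_bound ((hSmeas.abs.pow_const k)).aestronglyMeasurable (B ^ k) ?_
    filter_upwards [hSbd] with ω hω
    rw [Real.norm_eq_abs, abs_pow, abs_abs]
    exact pow_le_pow_left₀ (abs_nonneg _) hω k
  have hmemsqrt : MemLp (fun ω => Real.sqrt |S ω|) 2 μ := by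
    refine MemLp.of_bound (hSmeas.abs.sqrt).aestronglyMeasurable (Real.sqrt B) ?_
    filter_upwards [hSbd] with ω hω
    rw [Real.norm_eq_abs, abs_of_nonneg (Real.sqrt_nonneg _)]
    exact Real.sqrt_le_sqrt hω
  have hmemv : MemLp (fun ω => |S ω| * Real.sqrt |S ω|) 2 μ := by
    refine MemLp.of_bound ((hSmeas.abs.mul hSmeas.abs.sqrt)).aestronglyMeasurable
      (B * Real.sqrt B) ?_
    filter_upwards [hSbd] with ω hω
    rw [Real.norm_eq_abs, abs_mul, abs_abs, abs_of_nonneg (Real.sqrt_nonneg _)]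
    exact mul_le_mul hω (Real.sqrt_le_sqrt hω) (Real.sqrt_nonneg _) hBnn
  -- CS1 : (∫ S²)² ≤ (∫ |S|) * (∫ |S|³)
  have cs1 : (∫ ω, S ω ^ 2 ∂μ) ^ 2 ≤ (∫ ω, |S ω| ∂μ) * ∫ ω, |S ω| ^ 3 ∂μ := by
    have h := sq_integral_mul_le hmemsqrt hmemv
    have e1 : (fun ω => Real.sqrt |S ω| * (|S ω| * Real.sqrt |S ω|)) = fun ω => S ω ^ 2 := by
      funext ω
      have : Real.sqrt |S ω| * Real.sqrt |S ω| = |S ω| := Real.mul_self_sqrt (abs_nonneg _)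
      calc Real.sqrt |S ω| * (|S ω| * Real.sqrt |S ω|)
          = (Real.sqrt |S ω| * Real.sqrt |S ω|) * |S ω| := by ring
        _ = |S ω| * |S ω| := by rw [this]
        _ = S ω ^ 2 := by rw [← sq_abs]; ring
    have e2 : (fun ω => Real.sqrt |S ω| ^ 2) = fun ω => |S ω| := by
      funext ω; exact Real.sq_sqrt (abs_nonneg _)
    have e3 : (fun ω => (|S ω| * Real.sqrt |S ω|) ^ 2) = fun ω => |S ω| ^ 3 := by
      funext ω
      have : Real.sqrt |S ω| ^ 2 = |S ω| := Real.sq_sqrt (abs_nonneg _)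
      calc (|S ω| * Real.sqrt |S ω|) ^ 2 = |S ω| ^ 2 * Real.sqrt |S ω| ^ 2 := by ring
        _ = |S ω| ^ 2 * |S ω| := by rw [this]
        _ = |S ω| ^ 3 := by ring
    rw [e1, e2, e3] at h
    exact h
  -- CS2 : (∫ |S|³)² ≤ (∫ S²) * (∫ S⁴)
  have cs2 : (∫ ω, |S ω| ^ 3 ∂μ) ^ 2 ≤ (∫ ω, S ω ^ 2 ∂μ) * ∫ ω, S ω ^ 4 ∂μ := by
    have habsmem : MemLp (fun ω => |S ω|) 2 μ := by simpa using hmem 1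
    have hsqmem : MemLp (fun ω => S ω ^ 2) 2 μ := by
      refine MemLp.of_bound ((hSmeas.pow_const 2)).aestronglyMeasurable (B ^ 2) ?_
      filter_upwards [hSbd] with ω hω
      rw [Real.norm_eq_abs, abs_pow]
      exact pow_le_pow_left₀ (abs_nonneg _) hω 2
    have h := sq_integral_mul_le habsmem hsqmem
    have e1 : (fun ω => |S ω| * S ω ^ 2) = fun ω => |S ω| ^ 3 := by
      funext ω
      calc |S ω| * S ω ^ 2 = |S ω| * |S ω| ^ 2 := by rw [sq_abs]
        _ = |S ω| ^ 3 := by ring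
    have e2 : (fun ω => |S ω| ^ 2) = fun ω => S ω ^ 2 := by
      funext ω; rw [sq_abs]
    have e3 : (fun ω => (S ω ^ 2) ^ 2) = fun ω => S ω ^ 4 := by
      funext ω; ring
    rw [e1, e2, e3] at h
    exact h
  have hm0 : (0:ℝ) ≤ ∫ ω, |S ω| ∂μ := integral_nonneg fun ω => abs_nonneg _
  rcases eq_or_lt_of_le hT0 with hTeq | hTpos
  · rw [← hTeq, Real.sqrt_zero, mul_zero]
    exact hm0
  · -- derive the bound
    set m := ∫ ω, |S ω| ∂μ with hm
    set E3 := ∫ ω, |S ω| ^ 3 ∂μ with hE3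
    have hE30 : (0:ℝ) ≤ E3 := integral_nonneg fun ω => pow_nonneg (abs_nonneg _) 3
    rw [h2] at cs1
    rw [h2] at cs2
    have hE40 : (0:ℝ) ≤ ∫ ω, S ω ^ 4 ∂μ := integral_nonneg fun ω => by positivity
    have e1 : E3 ^ 2 ≤ 3 * T ^ 3 := by nlinarith [cs2, h4, hTpos]
    have e2 : T ^ 4 ≤ 3 * m ^ 2 * T ^ 3 := by nlinarith [cs1, e1, hm0, hE30]
    have hp3 : (0:ℝ) < T ^ 3 := pow_pos hTpos 3
    have key : T ≤ 3 * m ^ 2 := by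
      have h' : T * T ^ 3 ≤ (3 * m ^ 2) * T ^ 3 := by nlinarith [e2]
      exact le_of_mul_le_mul_right (by linarith [h']) hp3
    have hm2 : T / 3 ≤ m ^ 2 := by linarith
    have hfin : Real.sqrt (T / 3) ≤ m := by
      rw [show m = Real.sqrt (m ^ 2) from (Real.sqrt_sq hm0).symm]
      exact Real.sqrt_le_sqrt hm2
    rw [div_eq_mul_inv, Real.sqrt_mul hT0, Real.sqrt_inv] at hfin
    calc (Real.sqrt 3)⁻¹ * Real.sqrt T = Real.sqrt T * (Real.sqrt 3)⁻¹ := by ring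
      _ ≤ m := hfin

end Khintchine

section PiHelpers

lemma map_eval_pi {ι : Type*} [Fintype ι] {α : ι → Type*} [∀ i, MeasurableSpace (α i)]
    (μs : ∀ i, Measure (α i)) [∀ i, IsProbabilityMeasure (μs i)] (i : ι) :
    (Measure.pi μs).map (fun v => v i) = μs i := by
  classical
  ext s hs
  rw [Measure.map_apply (measurable_pi_apply i) hs]
  have h1 : ((fun v : ∀ j, α j => v i) ⁻¹' s)
      = Set.pi Set.univ (Function.update (fun j => (Set.univ : Set (α j))) i s) := by
    rw [Set.univ_pi_update_univ]
  rw [h1, Measure.pi_pi]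
  rw [Fintype.prod_eq_single i (fun j hj => by
    rw [Function.update_of_ne hj]; exact measure_univ)]
  rw [Function.update_self]

lemma iIndepFun_eval {ι : Type*} [Fintype ι] {α : ι → Type*} [mα : ∀ i, MeasurableSpace (α i)]
    (μs : ∀ i, Measure (α i)) [∀ i, IsProbabilityMeasure (μs i)] :
    iIndepFun (fun i (v : ∀ j, α j) => v i) (Measure.pi μs) := by
  classical
  rw [iIndepFun_iff_measure_inter_preimage_eq_mul]
  intro S sets hsets
  have h1 : (⋂ i ∈ S, (fun v : ∀ j, α j => v i) ⁻¹' sets i)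
      = Set.pi Set.univ (fun i => if i ∈ S then sets i else Set.univ) := by
    ext v
    simp only [Set.mem_iInter, Set.mem_preimage, Set.mem_pi, Set.mem_univ, true_implies]
    constructor
    · intro h i
      by_cases hi : i ∈ S
      · simpa [hi] using h i hi
      · simp [hi]
    · intro h i hi
      simpa [hi] using h i
  rw [h1, Measure.pi_pi]
  have h2 : ∀ i ∈ S, μs i (if i ∈ S then sets i else Set.univ)
      = Measure.pi μs ((fun v : ∀ j, α j => v i) ⁻¹' sets i) := by
    intro i hi
    rw [if_pos hi, ← map_eval_pi μs i, Measure.map_apply (measurable_pi_apply i) (hsets i hi)]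
  rw [← Finset.prod_subset (Finset.subset_univ S) (fun x _ hx => by
    simp only [if_neg hx]; exact measure_univ)]
  exact Finset.prod_congr rfl h2

/-- joint law of finitely many independent random variables is the product measure -/
lemma map_fun_pi {Ω : Type*} [MeasurableSpace Ω] {μ : Measure Ω} [IsProbabilityMeasure μ]
    {y : ℕ → Ω → ℝ} (hmeas : ∀ n, Measurable (y n))
    (hindep : iIndepFun y μ) (N : ℕ) :
    μ.map (fun ω (j : Fin N) => y j ω) = Measure.pi (fun j : Fin N => μ.map (y j)) := by
  classical
  refine (Measure.pi_eq fun s hs => ?_).symm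
  rw [Measure.map_apply (measurable_pi_lambda (fun ω (j : Fin N) => y j ω) (fun j => hmeas j)) (MeasurableSet.univ_pi hs)]
  set sets : ℕ → Set ℝ := fun n => if h : n < N then s ⟨n, h⟩ else Set.univ with hsets
  have hmsets : ∀ n ∈ Finset.range N, MeasurableSet (sets n) := by
    intro n hn
    rw [Finset.mem_range] at hn
    simp only [hsets, dif_pos hn]
    exact hs _
  have h1 : ((fun ω (j : Fin N) => y j ω) ⁻¹' Set.pi Set.univ s)
      = ⋂ n ∈ Finset.range N, y n ⁻¹' sets n := by
    ext ω
    simp only [Set.mem_preimage, Set.mem_pi, Set.mem_univ, true_implies, Set.mem_iInter,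
      Finset.mem_range]
    constructor
    · intro h n hn
      simp only [hsets, dif_pos hn]
      exact h ⟨n, hn⟩
    · intro h j
      have := h j.1 j.2
      simpa only [hsets, dif_pos j.2, Fin.eta] using this
  rw [h1, hindep.measure_inter_preimage_eq_mul (Finset.range N) hmsets]
  rw [← Fin.prod_univ_eq_prod_range (fun n => μ (y n ⁻¹' sets n)) N]
  refine Finset.prod_congr rfl fun j _ => ?_
  rw [Measure.map_apply (hmeas j) (hs j)]
  congr 1
  simp only [hsets, dif_pos j.2, Fin.eta]

end PiHelpers

section ProdHelpers

variable {Ω : Type*} [MeasurableSpace Ω] {Ω' : Type*} [MeasurableSpace Ω']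
  {μ : Measure Ω} {ν : Measure Ω'} [IsProbabilityMeasure μ] [IsProbabilityMeasure ν]

lemma integrable_comp_fst {g : Ω → ℝ} (hg : Integrable g μ) :
    Integrable (fun p : Ω × Ω' => g p.1) (μ.prod ν) := by
  have hmap : (μ.prod ν).map Prod.fst = μ := by simp
  have h := (integrable_map_measure (by rw [hmap]; exact hg.aestronglyMeasurable)
    measurable_fst.aemeasurable).1 (by rw [hmap]; exact hg)
  exact h

lemma integrable_comp_snd {g : Ω' → ℝ} (hg : Integrable g ν) :
    Integrable (fun p : Ω × Ω' => g p.2) (μ.prod ν) := by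
  have hmap : (μ.prod ν).map Prod.snd = ν := by simp
  have h := (integrable_map_measure (by rw [hmap]; exact hg.aestronglyMeasurable)
    measurable_snd.aemeasurable).1 (by rw [hmap]; exact hg)
  exact h

lemma integral_comp_fst {g : Ω → ℝ} (hg : AEStronglyMeasurable g μ) :
    ∫ p, g p.1 ∂(μ.prod ν) = ∫ ω, g ω ∂μ := by
  have hmap : (μ.prod ν).map Prod.fst = μ := by simp
  have h := integral_map (μ := μ.prod ν) (φ := Prod.fst) (f := g)
    measurable_fst.aemeasurable (by rw [hmap]; exact hg)
  rw [hmap] at h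
  exact h.symm

lemma integral_comp_snd {g : Ω' → ℝ} (hg : AEStronglyMeasurable g ν) :
    ∫ p, g p.2 ∂(μ.prod ν) = ∫ ω, g ω ∂ν := by
  have hmap : (μ.prod ν).map Prod.snd = ν := by simp
  have h := integral_map (μ := μ.prod ν) (φ := Prod.snd) (f := g)
    measurable_snd.aemeasurable (by rw [hmap]; exact hg)
  rw [hmap] at h
  exact h.symm

end ProdHelpers

section Rademacher

/-- the Rademacher distribution on `ℝ` -/
def rad : Measure ℝ := (2:ℝ≥0∞)⁻¹ • Measure.dirac 1 + (2:ℝ≥0∞)⁻¹ • Measure.dirac (-1)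

instance : IsProbabilityMeasure rad := by
  constructor
  simp only [rad, Measure.add_apply, Measure.smul_apply, smul_eq_mul, measure_univ, mul_one]
  exact ENNReal.inv_two_add_inv_two

lemma rad_meas_set : MeasurableSet {t : ℝ | ¬ |t| = 1} :=
  ((continuous_abs.measurable (measurableSet_singleton (1:ℝ))).compl)

lemma rad_abs_one : ∀ᵐ t ∂rad, |t| = 1 := by
  refine ae_iff.2 ?_
  have h1 : (1:ℝ) ∉ {t : ℝ | ¬ |t| = 1} := by simp
  have h2 : (-1:ℝ) ∉ {t : ℝ | ¬ |t| = 1} := by simp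
  simp only [rad, Measure.add_apply, Measure.smul_apply, smul_eq_mul]
  rw [Measure.dirac_apply' _ rad_meas_set, Measure.dirac_apply' _ rad_meas_set,
    Set.indicator_of_notMem h1, Set.indicator_of_notMem h2]
  simp

lemma integrable_dirac_real (f : ℝ → ℝ) (hf : Measurable f) (a : ℝ) :
    Integrable f (Measure.dirac a) := by
  refine ⟨hf.aestronglyMeasurable, ?_⟩
  rw [hasFiniteIntegral_def, lintegral_dirac' _ hf.enorm]
  exact enorm_lt_top

lemma rad_integral_id : ∫ t, t ∂rad = 0 := by
  have i1 : Integrable (fun t : ℝ => t) ((2:ℝ≥0∞)⁻¹ • Measure.dirac (1:ℝ)) :=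
    (integrable_dirac_real _ measurable_id _).smul_measure (by simp)
  have i2 : Integrable (fun t : ℝ => t) ((2:ℝ≥0∞)⁻¹ • Measure.dirac (-1:ℝ)) :=
    (integrable_dirac_real _ measurable_id _).smul_measure (by simp)
  rw [rad, integral_add_measure i1 i2, integral_smul_measure, integral_smul_measure,
    integral_dirac, integral_dirac]
  simp

end Rademacher

section Core

/-- a.e. transfer to second coordinate of a product -/
lemma ae_snd_prod {Ω : Type*} [MeasurableSpace Ω] {Ω' : Type*} [MeasurableSpace Ω']
    {μ : Measure Ω} {ν : Measure Ω'} [SFinite μ] [SFinite ν] [IsProbabilityMeasure μ]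
    {p : Ω' → Prop} (hm : MeasurableSet {b | p b}) (h : ∀ᵐ b ∂ν, p b) :
    ∀ᵐ q ∂(μ.prod ν), p q.2 := by
  rw [ae_iff] at h ⊢
  have hset : {q : Ω × Ω' | ¬ p q.2} = Set.univ ×ˢ {b | ¬ p b} := by
    ext q; simp
  rw [hset, Measure.prod_prod, h, mul_zero]

lemma sqrt_sum_sq_le {ι : Type*} (s : Finset ι) (x : ι → ℝ) :
    Real.sqrt (∑ j ∈ s, (x j) ^ 2) ≤ ∑ j ∈ s, |x j| := by
  have h1 : (∑ j ∈ s, (x j) ^ 2) ≤ (∑ j ∈ s, |x j|) ^ 2 := by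
    rw [sq (∑ j ∈ s, |x j|), Finset.sum_mul_sum]
    have : ∑ j ∈ s, (x j) ^ 2 = ∑ j ∈ s, |x j| * |x j| := by
      refine Finset.sum_congr rfl fun j _ => ?_
      rw [abs_mul_abs_self]; ring
    rw [this]
    refine Finset.sum_le_sum fun i hi => ?_
    have := Finset.single_le_sum (f := fun j => |x i| * |x j|)
      (fun j _ => mul_nonneg (abs_nonneg _) (abs_nonneg _)) hi
    exact this
  calc Real.sqrt (∑ j ∈ s, (x j) ^ 2) ≤ Real.sqrt ((∑ j ∈ s, |x j|) ^ 2) :=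
        Real.sqrt_le_sqrt h1
    _ = ∑ j ∈ s, |x j| := Real.sqrt_sq (Finset.sum_nonneg fun j _ => abs_nonneg _)

set_option maxHeartbeats 1000000 in
lemma core {Ω : Type*} [MeasurableSpace Ω] (μ : Measure Ω) [IsProbabilityMeasure μ]
    (y : ℕ → Ω → ℝ) (hmeas : ∀ n, Measurable (y n))
    (hindep : iIndepFun y μ)
    (hmean : ∀ n, ∫ ω, y n ω ∂μ = 0)
    (hint : ∀ n, Integrable (y n) μ)
    (c : ℝ) (hL1 : ∀ n, c ≤ ∫ ω, |y n ω| ∂μ)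
    (N : ℕ) (a : ℕ → ℝ) :
    2⁻¹ * c * (Real.sqrt 3)⁻¹ * Real.sqrt (∑ j ∈ Finset.range N, (a j) ^ 2)
      ≤ ∫ ω, |∑ j ∈ Finset.range N, a j * y j ω| ∂μ := by
  classical
  -- switch to `Fin N` indexing
  rw [← Fin.sum_univ_eq_sum_range (fun j => (a j) ^ 2) N]
  have hgoalint : (fun ω => |∑ j ∈ Finset.range N, a j * y j ω|)
      = fun ω => |∑ j : Fin N, a j * y j ω| := by
    funext ω
    rw [← Fin.sum_univ_eq_sum_range (fun j => a j * y j ω) N]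
  rw [hgoalint]
  have hT0 : (0:ℝ) ≤ ∑ j : Fin N, (a j) ^ 2 := Finset.sum_nonneg fun j _ => sq_nonneg _
  have hSmeas : Measurable (fun ω => ∑ j : Fin N, a j * y j ω) :=
    Finset.measurable_sum _ fun j _ => (hmeas j).const_mul _
  have hSabs0 : (0:ℝ) ≤ ∫ ω, |∑ j : Fin N, a j * y j ω| ∂μ :=
    integral_nonneg fun ω => abs_nonneg _
  rcases eq_or_lt_of_le hT0 with hTeq | hTpos
  · rw [← hTeq, Real.sqrt_zero, mul_zero]
    exact hSabs0
  -- basic objects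
  have hZmeas : ∀ j : Fin N, Measurable (fun p : Ω × Ω => y j p.1 - y j p.2) :=
    fun j => ((hmeas j).comp measurable_fst).sub ((hmeas j).comp measurable_snd)
  have hZint : ∀ j : Fin N, Integrable (fun p : Ω × Ω => y j p.1 - y j p.2) (μ.prod μ) :=
    fun j => (integrable_comp_fst (hint j)).sub (integrable_comp_snd (hint j))
  set ν : Fin N → Measure ℝ := fun j => μ.map (y j) with hν
  haveI : ∀ j, IsProbabilityMeasure (ν j) :=
    fun j => Measure.isProbabilityMeasure_map (hmeas j).aemeasurable
  set lam : Fin N → Measure ℝ := fun j => ((ν j).prod (ν j)).map (fun q : ℝ × ℝ => q.1 - q.2)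
    with hlam
  haveI hlamprob : ∀ j, IsProbabilityMeasure (lam j) :=
    fun j => Measure.isProbabilityMeasure_map (measurable_fst.sub measurable_snd).aemeasurable
  -- the law identity
  set Y : Ω → Fin N → ℝ := fun ω j => y j ω with hY
  have hYmeas : Measurable Y := measurable_pi_lambda _ fun j => hmeas j
  have hYlaw : μ.map Y = Measure.pi ν := map_fun_pi hmeas hindep N
  set D : (Fin N → ℝ × ℝ) → Fin N → ℝ := fun w j => (w j).1 - (w j).2 with hD
  have hDmeas : Measurable D := measurable_pi_lambda _ fun j =>
    (measurable_fst.comp (measurable_pi_apply j)).sub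
      (measurable_snd.comp (measurable_pi_apply j))
  have hDlaw : (Measure.pi (fun j => (ν j).prod (ν j))).map D = Measure.pi lam := by
    have h := measurePreserving_pi (fun j => (ν j).prod (ν j)) lam
      (f := fun (j : Fin N) (q : ℝ × ℝ) => q.1 - q.2)
      (fun j => ⟨measurable_fst.sub measurable_snd, rfl⟩)
    exact h.map_eq
  set e := MeasurableEquiv.arrowProdEquivProdArrow ℝ ℝ (Fin N) with he
  have hE : MeasurePreserving e (Measure.pi (fun j => (ν j).prod (ν j)))
      ((Measure.pi ν).prod (Measure.pi ν)) :=
    measurePreserving_arrowProdEquivProdArrow ℝ ℝ (Fin N) ν ν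
  have hZflaw : (μ.prod μ).map (fun p (j : Fin N) => y j p.1 - y j p.2) = Measure.pi lam := by
    have hcomp : (fun (p : Ω × Ω) (j : Fin N) => y j p.1 - y j p.2)
        = D ∘ (e.symm ∘ Prod.map Y Y) := rfl
    rw [hcomp, ← Measure.map_map hDmeas (e.symm.measurable.comp (hYmeas.prodMap hYmeas)),
      ← Measure.map_map e.symm.measurable (hYmeas.prodMap hYmeas),
      ← Measure.map_prod_map _ _ hYmeas hYmeas, hYlaw, ← hE.map_eq,
      Measure.map_map e.symm.measurable hE.measurable]
    have h2 : (⇑e.symm ∘ ⇑e) = id := by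
      funext w; exact e.symm_apply_apply w
    rw [h2, Measure.map_id, hDlaw]
  -- symmetry of each `lam j`
  have hsym : ∀ j, (lam j).map (fun t : ℝ => -t) = lam j := by
    intro j
    rw [hlam]
    simp only []
    rw [Measure.map_map (g := fun t : ℝ => -t) (f := fun q : ℝ × ℝ => q.1 - q.2) measurable_neg (measurable_fst.sub measurable_snd)]
    have h1 : ((fun t : ℝ => -t) ∘ fun q : ℝ × ℝ => q.1 - q.2)
        = (fun q : ℝ × ℝ => q.1 - q.2) ∘ Prod.swap := by
      funext q
      simp only [Function.comp_apply, Prod.fst_swap, Prod.snd_swap, neg_sub]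
    rw [h1, ← Measure.map_map (g := fun q : ℝ × ℝ => q.1 - q.2) (measurable_fst.sub measurable_snd) measurable_swap,
      Measure.prod_swap]
  -- sign flips preserve the product law
  have hflip : ∀ b : Fin N → ℝ, (∀ j, |b j| = 1) →
      (Measure.pi lam).map (fun v j => b j * v j) = Measure.pi lam := by
    intro b hb
    have h := measurePreserving_pi lam lam (f := fun (j : Fin N) (t : ℝ) => b j * t)
      (fun j => ?_)
    · exact h.map_eq
    · show MeasurePreserving (fun t : ℝ => b j * t) (lam j) (lam j)
      rcases abs_eq (le_of_lt one_pos) |>.1 (hb j) with hbj | hbj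
      · have h1 : (fun t : ℝ => b j * t) = id := by
          funext t; rw [hbj, one_mul]; rfl
        rw [h1]
        exact MeasurePreserving.id _
      · have h1 : (fun t : ℝ => b j * t) = fun t : ℝ => -t := by
          funext t; rw [hbj]; ring
        rw [h1]
        exact ⟨measurable_neg, hsym j⟩
  -- J : the symmetrized integral, expressed on the product law
  set J := ∫ v, |∑ j : Fin N, a j * v j| ∂(Measure.pi lam) with hJ
  have hg1meas : Measurable (fun v : Fin N → ℝ => |∑ j : Fin N, a j * v j|) :=
    (Finset.measurable_sum _ fun j _ => (measurable_pi_apply j).const_mul _).abs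
  have habsm : ∀ b : Fin N → ℝ,
      Measurable (fun v : Fin N → ℝ => |∑ j : Fin N, a j * b j * v j|) :=
    fun b => (Finset.measurable_sum _ fun j _ =>
      (measurable_pi_apply j).const_mul _).abs
  have hIb : ∀ b : Fin N → ℝ, (∀ j, |b j| = 1) →
      ∫ p, |∑ j : Fin N, a j * b j * (y j p.1 - y j p.2)| ∂(μ.prod μ) = J := by
    intro b hb
    have hTbm : Measurable (fun (v : Fin N → ℝ) (j : Fin N) => b j * v j) :=
      measurable_pi_lambda _ (fun j => (measurable_pi_apply j).const_mul _)
    have h1 : ∫ p, |∑ j : Fin N, a j * b j * (y j p.1 - y j p.2)| ∂(μ.prod μ)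
        = ∫ v, |∑ j : Fin N, a j * b j * v j| ∂(Measure.pi lam) := by
      rw [← hZflaw, integral_map (measurable_pi_lambda _ fun j => hZmeas j).aemeasurable
        (habsm b).aestronglyMeasurable]
    have h2 : ∫ v, |∑ j : Fin N, a j * b j * v j| ∂(Measure.pi lam) = J := by
      calc ∫ v, |∑ j : Fin N, a j * b j * v j| ∂(Measure.pi lam)
          = ∫ v, |∑ j : Fin N, a j * (b j * v j)| ∂(Measure.pi lam) := by
            refine integral_congr_ae (Filter.Eventually.of_forall fun v => ?_)
            have he2 : ∑ j : Fin N, a j * b j * v j = ∑ j : Fin N, a j * (b j * v j) :=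
              Finset.sum_congr rfl fun j _ => by ring
            simp only [he2]
        _ = ∫ w, |∑ j : Fin N, a j * w j|
              ∂((Measure.pi lam).map (fun v j => b j * v j)) := by
            rw [integral_map hTbm.aemeasurable hg1meas.aestronglyMeasurable]
        _ = J := by rw [hflip b hb, hJ]
    rw [h1, h2]
  have hDSJ : ∫ p, |∑ j : Fin N, a j * (y j p.1 - y j p.2)| ∂(μ.prod μ) = J := by
    have h := hIb (fun _ => 1) (fun j => by simp)
    simpa using h
  -- the Rademacher cube
  have hβabs : ∀ᵐ b ∂(Measure.pi (fun _ : Fin N => rad)), ∀ j, |b j| = 1 :=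
    Filter.eventually_all.2 fun j =>
      (Measure.tendsto_eval_ae_ae (μ := fun _ : Fin N => rad) (i := j)).eventually rad_abs_one
  have hβmean : ∀ j : Fin N, ∫ b, b j ∂(Measure.pi (fun _ : Fin N => rad)) = 0 := by
    intro j
    have h := integral_map (μ := Measure.pi (fun _ : Fin N => rad))
      (φ := fun v : Fin N → ℝ => v j) (f := fun t : ℝ => t)
      (measurable_pi_apply j).aemeasurable measurable_id.aestronglyMeasurable
    rw [map_eval_pi (fun _ => rad) j, rad_integral_id] at h
    exact h.symm
  -- khintchine pointwise on the cube
  have hkh : ∀ p : Ω × Ω,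
      (Real.sqrt 3)⁻¹ * Real.sqrt (∑ j : Fin N, (a j * (y j p.1 - y j p.2)) ^ 2)
        ≤ ∫ b, |∑ j : Fin N, (a j * (y j p.1 - y j p.2)) * b j|
            ∂(Measure.pi (fun _ : Fin N => rad)) := by
    intro p
    exact khintchine_lower (fun j => measurable_pi_apply j) (iIndepFun_eval _)
      hβmean (fun j =>
        (Measure.tendsto_eval_ae_ae (μ := fun _ : Fin N => rad) (i := j)).eventually rad_abs_one)
      (fun j => a j * (y j p.1 - y j p.2)) Finset.univ
  -- the function G on the big product space
  set G : (Ω × Ω) × (Fin N → ℝ) → ℝ :=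
    fun q => |∑ j : Fin N, (a j * (y j q.1.1 - y j q.1.2)) * q.2 j| with hG
  have hGmeas : Measurable G := by
    refine (Finset.measurable_sum _ fun j _ => ?_).abs
    exact (((hZmeas j).comp measurable_fst).const_mul _).mul
      ((measurable_pi_apply j).comp measurable_snd)
  have hZabsint : Integrable (fun p : Ω × Ω => ∑ j : Fin N, |a j| * |y j p.1 - y j p.2|)
      (μ.prod μ) :=
    integrable_finset_sum _ fun j _ => ((hZint j).abs.const_mul _)
  have hbsetm : MeasurableSet {b : Fin N → ℝ | ∀ j, |b j| = 1} := by
    have hs : {b : Fin N → ℝ | ∀ j, |b j| = 1}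
        = ⋂ j, (fun b : Fin N → ℝ => b j) ⁻¹' {t : ℝ | ¬ |t| = 1}ᶜ := by
      ext b; simp
    rw [hs]
    exact MeasurableSet.iInter fun j => (measurable_pi_apply j) rad_meas_set.compl
  have hPabs : ∀ᵐ q ∂((μ.prod μ).prod (Measure.pi (fun _ : Fin N => rad))), ∀ j, |q.2 j| = 1 :=
    ae_snd_prod hbsetm hβabs
  have hGint : Integrable G ((μ.prod μ).prod (Measure.pi (fun _ : Fin N => rad))) := by
    refine Integrable.mono' (integrable_comp_fst hZabsint) hGmeas.aestronglyMeasurable ?_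
    filter_upwards [hPabs] with q hq
    rw [Real.norm_eq_abs, hG]
    simp only [abs_abs]
    calc |∑ j : Fin N, (a j * (y j q.1.1 - y j q.1.2)) * q.2 j|
        ≤ ∑ j : Fin N, |(a j * (y j q.1.1 - y j q.1.2)) * q.2 j| :=
          Finset.abs_sum_le_sum_abs _ _
      _ = ∑ j : Fin N, |a j| * |y j q.1.1 - y j q.1.2| := by
          refine Finset.sum_congr rfl fun j _ => ?_
          rw [abs_mul, abs_mul, hq j, mul_one]
  -- Fubini one way : the cube average recovers J
  have hfub1 : ∫ q, G q ∂((μ.prod μ).prod (Measure.pi (fun _ : Fin N => rad))) = J := by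
    rw [integral_prod_symm G hGint]
    have hae : (fun b => ∫ p, G (p, b) ∂(μ.prod μ)) =ᵐ[Measure.pi (fun _ : Fin N => rad)]
        fun _ => J := by
      filter_upwards [hβabs] with b hb
      have h := hIb b hb
      rw [← h]
      refine integral_congr_ae (Filter.Eventually.of_forall fun p => ?_)
      have he2 : ∑ j : Fin N, (a j * (y j p.1 - y j p.2)) * b j
          = ∑ j : Fin N, a j * b j * (y j p.1 - y j p.2) :=
        Finset.sum_congr rfl fun j _ => by ring
      rw [hG]
      simp only []
      rw [he2]
    rw [integral_congr_ae hae]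
    simp
  -- Fubini other way : lower bound via Khintchine
  have hsqrtmeas : Measurable (fun p : Ω × Ω =>
      Real.sqrt (∑ j : Fin N, (a j * (y j p.1 - y j p.2)) ^ 2)) :=
    (Finset.measurable_sum _ fun j _ => ((hZmeas j).const_mul _).pow_const 2).sqrt
  have hsqrtbd : ∀ p : Ω × Ω, Real.sqrt (∑ j : Fin N, (a j * (y j p.1 - y j p.2)) ^ 2)
      ≤ ∑ j : Fin N, |a j| * |y j p.1 - y j p.2| := by
    intro p
    calc Real.sqrt (∑ j : Fin N, (a j * (y j p.1 - y j p.2)) ^ 2)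
        ≤ ∑ j : Fin N, |a j * (y j p.1 - y j p.2)| := sqrt_sum_sq_le Finset.univ _
      _ = ∑ j : Fin N, |a j| * |y j p.1 - y j p.2| :=
          Finset.sum_congr rfl fun j _ => abs_mul _ _
  have hsqrtint : Integrable (fun p : Ω × Ω =>
      Real.sqrt (∑ j : Fin N, (a j * (y j p.1 - y j p.2)) ^ 2)) (μ.prod μ) := by
    refine Integrable.mono' hZabsint hsqrtmeas.aestronglyMeasurable ?_
    refine Filter.Eventually.of_forall fun p => ?_
    rw [Real.norm_eq_abs, abs_of_nonneg (Real.sqrt_nonneg _)]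
    exact hsqrtbd p
  have hfub2 : (Real.sqrt 3)⁻¹
      * ∫ p, Real.sqrt (∑ j : Fin N, (a j * (y j p.1 - y j p.2)) ^ 2) ∂(μ.prod μ)
      ≤ ∫ q, G q ∂((μ.prod μ).prod (Measure.pi (fun _ : Fin N => rad))) := by
    rw [integral_prod G hGint, ← integral_const_mul]
    refine integral_mono ?_ (hGint.integral_prod_left) ?_
    · exact hsqrtint.const_mul _
    · exact fun p => hkh p
  -- lower bound for the integral of sqrt(...)
  have hZc : ∀ j : Fin N, c ≤ ∫ p, |y j p.1 - y j p.2| ∂(μ.prod μ) := by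
    intro j
    have hfb := integral_prod (f := fun p : Ω × Ω => |y j p.1 - y j p.2|)
      ((hZint j).abs)
    rw [hfb]
    have hinner : ∀ ω, |y j ω| ≤ ∫ ω', |y j ω - y j ω'| ∂μ := by
      intro ω
      have h1 : ∫ ω', (y j ω - y j ω') ∂μ = y j ω := by
        rw [integral_sub (integrable_const _) (hint j), integral_const, hmean j]
        simp
      calc |y j ω| = |∫ ω', (y j ω - y j ω') ∂μ| := by rw [h1]
        _ ≤ ∫ ω', |y j ω - y j ω'| ∂μ := by
            have h3 := norm_integral_le_integral_norm (f := fun ω' => y j ω - y j ω') (μ := μ)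
            simpa [Real.norm_eq_abs] using h3
    calc c ≤ ∫ ω, |y j ω| ∂μ := hL1 j
      _ ≤ ∫ ω, ∫ ω', |y j ω - y j ω'| ∂μ ∂μ := by
          refine integral_mono (hint j).abs ?_ hinner
          exact ((hZint j).abs).integral_prod_left
  have hsqrtlow : c * Real.sqrt (∑ j : Fin N, (a j) ^ 2)
      ≤ ∫ p, Real.sqrt (∑ j : Fin N, (a j * (y j p.1 - y j p.2)) ^ 2) ∂(μ.prod μ) := by
    have hptwise : ∀ p : Ω × Ω, (∑ j : Fin N, (a j) ^ 2 * |y j p.1 - y j p.2|)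
        ≤ Real.sqrt (∑ j : Fin N, (a j) ^ 2)
          * Real.sqrt (∑ j : Fin N, (a j * (y j p.1 - y j p.2)) ^ 2) := by
      intro p
      have hcs := Finset.sum_mul_sq_le_sq_mul_sq Finset.univ (fun j : Fin N => |a j|)
        (fun j => |a j| * |y j p.1 - y j p.2|)
      have e1 : ∑ j : Fin N, |a j| * (|a j| * |y j p.1 - y j p.2|)
          = ∑ j : Fin N, (a j) ^ 2 * |y j p.1 - y j p.2| := by
        refine Finset.sum_congr rfl fun j _ => ?_
        rw [← mul_assoc, abs_mul_abs_self]; ring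
      have e2 : ∑ j : Fin N, |a j| ^ 2 = ∑ j : Fin N, (a j) ^ 2 :=
        Finset.sum_congr rfl fun j _ => sq_abs _
      have e3 : ∑ j : Fin N, (|a j| * |y j p.1 - y j p.2|) ^ 2
          = ∑ j : Fin N, (a j * (y j p.1 - y j p.2)) ^ 2 := by
        refine Finset.sum_congr rfl fun j _ => ?_
        rw [mul_pow, sq_abs, sq_abs, mul_pow]
      rw [e1, e2, e3] at hcs
      have hnn : (0:ℝ) ≤ ∑ j : Fin N, (a j) ^ 2 * |y j p.1 - y j p.2| :=
        Finset.sum_nonneg fun j _ => mul_nonneg (sq_nonneg _) (abs_nonneg _)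
      calc ∑ j : Fin N, (a j) ^ 2 * |y j p.1 - y j p.2|
          = Real.sqrt ((∑ j : Fin N, (a j) ^ 2 * |y j p.1 - y j p.2|) ^ 2) :=
            (Real.sqrt_sq hnn).symm
        _ ≤ Real.sqrt ((∑ j : Fin N, (a j) ^ 2)
              * ∑ j : Fin N, (a j * (y j p.1 - y j p.2)) ^ 2) := Real.sqrt_le_sqrt hcs
        _ = Real.sqrt (∑ j : Fin N, (a j) ^ 2)
              * Real.sqrt (∑ j : Fin N, (a j * (y j p.1 - y j p.2)) ^ 2) :=
            Real.sqrt_mul hT0 _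
    have hintsum : ∫ p, ∑ j : Fin N, (a j) ^ 2 * |y j p.1 - y j p.2| ∂(μ.prod μ)
        = ∑ j : Fin N, (a j) ^ 2 * ∫ p, |y j p.1 - y j p.2| ∂(μ.prod μ) := by
      rw [integral_finset_sum _ fun j _ => (hZint j).abs.const_mul _]
      exact Finset.sum_congr rfl fun j _ => integral_const_mul _ _
    have hsum_ge : c * (∑ j : Fin N, (a j) ^ 2)
        ≤ ∑ j : Fin N, (a j) ^ 2 * ∫ p, |y j p.1 - y j p.2| ∂(μ.prod μ) := by
      have he : c * (∑ j : Fin N, (a j) ^ 2) = ∑ j : Fin N, (a j) ^ 2 * c := by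
        rw [Finset.sum_congr rfl fun (j : Fin N) _ => (mul_comm ((a j) ^ 2) c),
          ← Finset.mul_sum]
      rw [he]
      exact Finset.sum_le_sum fun j _ => mul_le_mul_of_nonneg_left (hZc j) (sq_nonneg _)
    have hmono : ∫ p, ∑ j : Fin N, (a j) ^ 2 * |y j p.1 - y j p.2| ∂(μ.prod μ)
        ≤ Real.sqrt (∑ j : Fin N, (a j) ^ 2)
          * ∫ p, Real.sqrt (∑ j : Fin N, (a j * (y j p.1 - y j p.2)) ^ 2) ∂(μ.prod μ) := by
      rw [← integral_const_mul]
      exact integral_mono (integrable_finset_sum _ fun j _ => (hZint j).abs.const_mul _)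
        (hsqrtint.const_mul _) hptwise
    have hfinal : c * (∑ j : Fin N, (a j) ^ 2) ≤ Real.sqrt (∑ j : Fin N, (a j) ^ 2)
        * ∫ p, Real.sqrt (∑ j : Fin N, (a j * (y j p.1 - y j p.2)) ^ 2) ∂(μ.prod μ) := by
      calc c * (∑ j : Fin N, (a j) ^ 2)
          ≤ ∑ j : Fin N, (a j) ^ 2 * ∫ p, |y j p.1 - y j p.2| ∂(μ.prod μ) := hsum_ge
        _ = ∫ p, ∑ j : Fin N, (a j) ^ 2 * |y j p.1 - y j p.2| ∂(μ.prod μ) := hintsum.symm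
        _ ≤ _ := hmono
    have hsT : (0:ℝ) < Real.sqrt (∑ j : Fin N, (a j) ^ 2) := Real.sqrt_pos.2 hTpos
    rw [show c * Real.sqrt (∑ j : Fin N, (a j) ^ 2)
        = c * (∑ j : Fin N, (a j) ^ 2) / Real.sqrt (∑ j : Fin N, (a j) ^ 2) by
      rw [mul_div_assoc, Real.div_sqrt]]
    rw [div_le_iff₀ hsT]
    calc c * (∑ j : Fin N, (a j) ^ 2) ≤ _ := hfinal
      _ = (∫ p, Real.sqrt (∑ j : Fin N, (a j * (y j p.1 - y j p.2)) ^ 2) ∂(μ.prod μ))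
          * Real.sqrt (∑ j : Fin N, (a j) ^ 2) := mul_comm _ _
  -- symmetrization: J ≤ 2 ∫ |S|
  have hSint : Integrable (fun ω => ∑ j : Fin N, a j * y j ω) μ :=
    integrable_finset_sum _ fun j _ => (hint j).const_mul _
  have hsymm : J ≤ 2 * ∫ ω, |∑ j : Fin N, a j * y j ω| ∂μ := by
    rw [← hDSJ]
    have hDSint : Integrable (fun p : Ω × Ω => |∑ j : Fin N, a j * (y j p.1 - y j p.2)|)
        (μ.prod μ) :=
      (integrable_finset_sum _ fun j _ => (hZint j).const_mul _).abs
    have hptw : ∀ p : Ω × Ω, |∑ j : Fin N, a j * (y j p.1 - y j p.2)|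
        ≤ |∑ j : Fin N, a j * y j p.1| + |∑ j : Fin N, a j * y j p.2| := by
      intro p
      have he : ∑ j : Fin N, a j * (y j p.1 - y j p.2)
          = (∑ j : Fin N, a j * y j p.1) - ∑ j : Fin N, a j * y j p.2 := by
        rw [← Finset.sum_sub_distrib]
        exact Finset.sum_congr rfl fun j _ => by ring
      rw [he]
      exact abs_sub _ _
    have hrhs : ∫ p, (|∑ j : Fin N, a j * y j p.1| + |∑ j : Fin N, a j * y j p.2|) ∂(μ.prod μ)
        = 2 * ∫ ω, |∑ j : Fin N, a j * y j ω| ∂μ := by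
      rw [integral_add (integrable_comp_fst hSint.abs) (integrable_comp_snd hSint.abs)]
      rw [integral_comp_fst hSmeas.abs.aestronglyMeasurable,
        integral_comp_snd hSmeas.abs.aestronglyMeasurable]
      ring
    calc ∫ p, |∑ j : Fin N, a j * (y j p.1 - y j p.2)| ∂(μ.prod μ)
        ≤ ∫ p, (|∑ j : Fin N, a j * y j p.1| + |∑ j : Fin N, a j * y j p.2|) ∂(μ.prod μ) :=
          integral_mono hDSint ((integrable_comp_fst hSint.abs).add
            (integrable_comp_snd hSint.abs)) hptw
      _ = 2 * ∫ ω, |∑ j : Fin N, a j * y j ω| ∂μ := hrhs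
  -- put everything together
  have hJlow : (Real.sqrt 3)⁻¹ * (c * Real.sqrt (∑ j : Fin N, (a j) ^ 2)) ≤ J := by
    calc (Real.sqrt 3)⁻¹ * (c * Real.sqrt (∑ j : Fin N, (a j) ^ 2))
        ≤ (Real.sqrt 3)⁻¹
            * ∫ p, Real.sqrt (∑ j : Fin N, (a j * (y j p.1 - y j p.2)) ^ 2) ∂(μ.prod μ) := by
          refine mul_le_mul_of_nonneg_left hsqrtlow ?_
          positivity
      _ ≤ ∫ q, G q ∂((μ.prod μ).prod (Measure.pi (fun _ : Fin N => rad))) := hfub2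
      _ = J := hfub1
  have hfin := le_trans hJlow hsymm
  linarith

end Core

section Assembly

instance : IsProbabilityMeasure μ01 := by
  constructor
  rw [μ01, Measure.restrict_apply_univ, Real.volume_Icc]
  norm_num

lemma coeFn_sum_smul (N : ℕ) (g : ℕ → ℝ) (y : ℕ → Lp ℝ 2 μ01) :
    ⇑(∑ j ∈ Finset.range N, g j • y j) =ᵐ[μ01] fun t => ∑ j ∈ Finset.range N, g j * y j t := by
  induction N with
  | zero =>
    simp only [Finset.range_zero, Finset.sum_empty]
    exact Lp.coeFn_zero ℝ 2 μ01
  | succ n ih =>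
    rw [Finset.sum_range_succ]
    have h1 := Lp.coeFn_add (∑ j ∈ Finset.range n, g j • y j) (g n • y n)
    have h2 := Lp.coeFn_smul (g n) (y n)
    filter_upwards [h1, h2, ih] with t ht1 ht2 ht3
    rw [ht1]
    simp only [Pi.add_apply]
    rw [ht3, ht2, Finset.sum_range_succ]
    simp [smul_eq_mul]

lemma lp_norm_eq (z : Lp ℝ 2 μ01) : ‖z‖ = Real.sqrt (∫ t, (z t) ^ 2 ∂μ01) := by
  have h1 : (inner ℝ z z : ℝ) = ∫ t, (z t) ^ 2 ∂μ01 := by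
    rw [L2.inner_def]
    refine integral_congr_ae (Filter.Eventually.of_forall fun t => ?_)
    simp [RCLike.inner_apply, sq]
  have h2 : ‖z‖ ^ 2 = ∫ t, (z t) ^ 2 ∂μ01 := by
    rw [← real_inner_self_eq_norm_sq, h1]
  rw [← h2, Real.sqrt_sq (norm_nonneg _)]

lemma abs_integral_continuous :
    Continuous (fun x : Lp ℝ 2 μ01 => ∫ t, |x t| ∂μ01) := by
  have key : ∀ x x' : Lp ℝ 2 μ01,
      (∫ t, |x t| ∂μ01) - (∫ t, |x' t| ∂μ01) ≤ ‖x - x'‖ := by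
    intro x x'
    have hix : Integrable (fun t => |x t|) μ01 := ((Lp.memLp x).integrable one_le_two).abs
    have hix' : Integrable (fun t => |x' t|) μ01 := ((Lp.memLp x').integrable one_le_two).abs
    have hid : Integrable (fun t => |(x - x' : Lp ℝ 2 μ01) t|) μ01 :=
      ((Lp.memLp (x - x')).integrable one_le_two).abs
    have h1 : (∫ t, |x t| ∂μ01) - (∫ t, |x' t| ∂μ01)
        = ∫ t, (|x t| - |x' t|) ∂μ01 := (integral_sub hix hix').symm
    have h2 : ∫ t, (|x t| - |x' t|) ∂μ01 ≤ ∫ t, |(x - x' : Lp ℝ 2 μ01) t| ∂μ01 := by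
      refine integral_mono_ae (hix.sub hix') hid ?_
      filter_upwards [Lp.coeFn_sub x x'] with t ht
      rw [ht]
      simp only [Pi.sub_apply]
      exact abs_sub_abs_le_abs_sub _ _
    have h3 : ∫ t, |(x - x' : Lp ℝ 2 μ01) t| ∂μ01
        ≤ Real.sqrt (∫ t, ((x - x' : Lp ℝ 2 μ01) t) ^ 2 ∂μ01) :=
      integral_abs_le_sqrt (Lp.memLp (x - x'))
    rw [h1]
    calc ∫ t, (|x t| - |x' t|) ∂μ01 ≤ ∫ t, |(x - x' : Lp ℝ 2 μ01) t| ∂μ01 := h2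
      _ ≤ Real.sqrt (∫ t, ((x - x' : Lp ℝ 2 μ01) t) ^ 2 ∂μ01) := h3
      _ = ‖x - x'‖ := (lp_norm_eq _).symm
  have hlip : LipschitzWith 1 (fun x : Lp ℝ 2 μ01 => ∫ t, |x t| ∂μ01) := by
    refine LipschitzWith.of_dist_le_mul fun x x' => ?_
    rw [Real.dist_eq, dist_eq_norm]
    simp only [NNReal.coe_one, one_mul]
    rw [abs_le]
    constructor
    · have := key x' x
      have hn : ‖x' - x‖ = ‖x - x'‖ := norm_sub_rev _ _
      linarith [this, hn.le]
    · exact key x x'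
  exact hlip.continuous

end Assembly

end L1L2Aux

open L1L2Aux in
/-- Lemma 3.5: there is a universal Khintchine constant `A₁ > 0` (so that
`E|Σ aⱼrⱼ| ≥ A₁ (Σ aⱼ²)^{1/2}` for any Rademacher sequence `(rⱼ)`) such that whenever `(yⱼ)` is an
orthonormal sequence of independent, mean-zero random variables in `L²([0,1])` with
`‖yⱼ‖_{L¹} ≥ c > 0` for all `j`, every `x` in the closed span of `(yⱼ)` satisfies
`‖x‖_{L¹} ≥ (1/2) c A₁ ‖x‖_{L²}`. -/
theorem l1_l2_comparable_of_independent :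
    ∃ A₁ > (0 : ℝ),
      -- `A₁` is a Khintchine constant:
      (∀ (Ω : Type) (_ : MeasurableSpace Ω) (μ : Measure Ω), IsProbabilityMeasure μ →
        ∀ r : ℕ → Ω → ℝ, (∀ j, Measurable (r j)) →
          iIndepFun r μ →
          (∀ j, ∫ ω, r j ω ∂μ = 0) →
          (∀ j, ∀ᵐ ω ∂μ, |r j ω| = 1) →
          ∀ (N : ℕ) (c : ℕ → ℝ),
            A₁ * Real.sqrt (∑ j ∈ Finset.range N, (c j) ^ 2) ≤
              ∫ ω, |∑ j ∈ Finset.range N, c j * r j ω| ∂μ) ∧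
      -- the conclusion of the lemma:
      (∀ y : ℕ → Lp ℝ 2 μ01, Orthonormal ℝ y →
        iIndepFun (fun n => ((y n : ℝ → ℝ))) μ01 →
        (∀ n, ∫ t, (y n : ℝ → ℝ) t ∂μ01 = 0) →
        ∀ c > (0 : ℝ), (∀ n, c ≤ ∫ t, |(y n : ℝ → ℝ) t| ∂μ01) →
        ∀ x : Lp ℝ 2 μ01, x ∈ (Submodule.span ℝ (Set.range y)).topologicalClosure →
          (1 / 2) * c * A₁ * ‖x‖ ≤ ∫ t, |(x : ℝ → ℝ) t| ∂μ01) := by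
  classical
  refine ⟨(Real.sqrt 3)⁻¹, by positivity, ?_, ?_⟩
  · intro Ω mΩ μ hprob r hrm hri hrmean hrabs N c
    haveI := hprob
    exact khintchine_lower hrm hri hrmean hrabs c (Finset.range N)
  · intro y hON hind hmean c hc hL1 x hx
    set P : Set (Lp ℝ 2 μ01) :=
      {z | (1 / 2) * c * (Real.sqrt 3)⁻¹ * ‖z‖ ≤ ∫ t, |z t| ∂μ01} with hP
    have hclosed : IsClosed P :=
      isClosed_le (by fun_prop) abs_integral_continuous
    have hspan : (Submodule.span ℝ (Set.range y) : Set (Lp ℝ 2 μ01)) ⊆ P := by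
      intro z hz
      rw [SetLike.mem_coe, Finsupp.mem_span_range_iff_exists_finsupp] at hz
      obtain ⟨f, hf⟩ := hz
      set N := (f.support.sup id) + 1 with hN
      have hsupp : f.support ⊆ Finset.range N := fun i hi =>
        Finset.mem_range.2 (Nat.lt_succ_of_le (Finset.le_sup (f := id) hi))
      have hzeq : z = ∑ j ∈ Finset.range N, f j • y j := by
        rw [← hf]
        exact Finsupp.sum_of_support_subset f hsupp (fun i a => a • y i)
          (fun i _ => zero_smul ℝ (y i))
      -- the norm of z
      have hnormz : ‖z‖ = Real.sqrt (∑ j ∈ Finset.range N, (f j) ^ 2) := by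
        have h1 : (inner ℝ z z : ℝ) = ∑ j ∈ Finset.range N, f j * f j := by
          conv_lhs => rw [hzeq]
          rw [hON.inner_sum]
          simp
        have h2 : ‖z‖ ^ 2 = ∑ j ∈ Finset.range N, (f j) ^ 2 := by
          rw [← real_inner_self_eq_norm_sq, h1]
          exact Finset.sum_congr rfl fun j _ => (sq (f j)).symm
        rw [← h2, Real.sqrt_sq (norm_nonneg _)]
      -- the coercion of z
      have hcoe : ⇑z =ᵐ[μ01] fun t => ∑ j ∈ Finset.range N, f j * y j t := by
        rw [hzeq]
        exact coeFn_sum_smul N (fun j => f j) y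
      have hintz : ∫ t, |z t| ∂μ01 = ∫ t, |∑ j ∈ Finset.range N, f j * y j t| ∂μ01 := by
        refine integral_congr_ae ?_
        filter_upwards [hcoe] with t ht
        rw [ht]
      -- apply the core inequality
      have hcore := core μ01 (fun n => ⇑(y n))
        (fun n => (Lp.stronglyMeasurable (y n)).measurable) hind hmean
        (fun n => (Lp.memLp (y n)).integrable one_le_two) c hL1 N (fun j => f j)
      rw [hP]
      simp only [Set.mem_setOf_eq]
      rw [hnormz, hintz]
      have h12 : (1 / 2 : ℝ) = 2⁻¹ := by norm_num
      rw [h12]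
      exact hcore
    have hxP : x ∈ P := by
      have hcl : (Submodule.span ℝ (Set.range y)).topologicalClosure.carrier
          ⊆ P := by
        have h := closure_minimal hspan hclosed
        intro w hw
        exact h hw
      exact hcl hx
    exact hxP
end
end
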